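/- arXiv:1803.05671 — 12 statements merged into one kernel-verified Lean document; each statement's English description precedes it below -/
import Mathlib

section
/- Let f : ℝ^N → ℝ ∪ {+∞} be a proper function with effective domain dom f = ℝ₊^N, taking nonnegative values on its domain, and such that the restriction of f to ℝ₊^N is continuous and concave. Then for every d ∈ ℝ₊^N, the asymptotic function value f_∞(d) := liminf_{t→∞, y→d} f(ty)/t equals inf{ f(x+d) − f(x) : x ∈ ℝ₊^N }. -/
open Filter Topology

private lemma aux_slope {N : ℕ} {g : (Fin N → ℝ) → ℝ}
    (hconc : ConcaveOn ℝ {x : Fin N → ℝ | ∀ i, 0 ≤ x i} g)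
    {x v : Fin N → ℝ} (hx : ∀ i, 0 ≤ x i) (hv : ∀ i, 0 ≤ v i)
    {t : ℝ} (ht : 1 ≤ t) :
    g (x + t • v) ≤ g x + t * (g (x + v) - g x) := by
  have ht0 : (0:ℝ) < t := lt_of_lt_of_le one_pos ht
  have hxtv : ∀ i, 0 ≤ (x + t • v) i := fun i =>
    add_nonneg (hx i) (mul_nonneg ht0.le (hv i))
  have key : (1 - 1/t) • x + (1/t) • (x + t • v) = x + v := by
    have h1 : (1:ℝ)/t * t = 1 := by field_simp
    rw [smul_add, smul_smul, h1, one_smul, ← add_assoc, ← add_smul, sub_add_cancel, one_smul]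
  have ha : (0:ℝ) ≤ 1 - 1/t := by
    rw [sub_nonneg]
    exact (div_le_one ht0).mpr ht
  have hb : (0:ℝ) ≤ 1/t := by positivity
  have hco := hconc.2 hx hxtv ha hb (by ring)
  rw [key] at hco
  simp only [smul_eq_mul] at hco
  have h2 := mul_le_mul_of_nonneg_left hco ht0.le
  have e1 : t * ((1 - 1/t) * g x + (1/t) * g (x + t • v))
      = (t - 1) * g x + g (x + t • v) := by
    field_simp
    try ring
  rw [e1] at h2
  linarith

private lemma aux_mono {N : ℕ} {g : (Fin N → ℝ) → ℝ}
    (hconc : ConcaveOn ℝ {x : Fin N → ℝ | ∀ i, 0 ≤ x i} g)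
    (hnonneg : ∀ x : Fin N → ℝ, (∀ i, 0 ≤ x i) → 0 ≤ g x)
    {x v : Fin N → ℝ} (hx : ∀ i, 0 ≤ x i) (hv : ∀ i, 0 ≤ v i) :
    g x ≤ g (x + v) := by
  by_contra h
  push_neg at h
  set t : ℝ := max 1 ((g x + 1)/(g x - g (x + v))) with htdef
  have ht1 : 1 ≤ t := le_max_left _ _
  have ht0 : (0:ℝ) < t := lt_of_lt_of_le one_pos ht1
  have hpos : 0 < g x - g (x + v) := sub_pos.mpr h
  have h2 : (g x + 1) / (g x - g (x + v)) ≤ t := le_max_right _ _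
  have h3 : g x + 1 ≤ t * (g x - g (x + v)) := (div_le_iff₀ hpos).mp h2
  have h4 := aux_slope hconc hx hv ht1
  have h5 : 0 ≤ g (x + t • v) := hnonneg _ (fun i =>
    add_nonneg (hx i) (mul_nonneg ht0.le (hv i)))
  have h6 : g x + t * (g (x + v) - g x) = g x - t * (g x - g (x + v)) := by ring
  linarith

private lemma aux_mono' {N : ℕ} {g : (Fin N → ℝ) → ℝ}
    (hconc : ConcaveOn ℝ {x : Fin N → ℝ | ∀ i, 0 ≤ x i} g)
    (hnonneg : ∀ x : Fin N → ℝ, (∀ i, 0 ≤ x i) → 0 ≤ g x)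
    {x y : Fin N → ℝ} (hx : ∀ i, 0 ≤ x i) (hxy : ∀ i, x i ≤ y i) :
    g x ≤ g y := by
  have hv : ∀ i, 0 ≤ (y - x) i := fun i => sub_nonneg.mpr (hxy i)
  have hmain := aux_mono hconc hnonneg hx hv
  have hxy' : x + (y - x) = y := by abel
  rwa [hxy'] at hmain

/-- For a proper function `f : ℝ^N → ℝ ∪ {+∞}` with effective domain `ℝ₊^N`
(represented via a real-valued function `g` on the domain, with `f = ⊤` outside),
nonnegative, continuous and concave on its domain, the asymptotic function
`f_∞(d) = liminf_{t→∞, y→d} f(ty)/t` equals `inf { f(x+d) - f(x) : x ∈ ℝ₊^N }`. -/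
theorem stmt_0 (N : ℕ) (hN : 1 ≤ N)
    (g : (Fin N → ℝ) → ℝ)
    (hcont : ContinuousOn g {x : Fin N → ℝ | ∀ i, 0 ≤ x i})
    (hconc : ConcaveOn ℝ {x : Fin N → ℝ | ∀ i, 0 ≤ x i} g)
    (hnonneg : ∀ x : Fin N → ℝ, (∀ i, 0 ≤ x i) → 0 ≤ g x)
    (f : (Fin N → ℝ) → EReal)
    (hf_dom : ∀ x : Fin N → ℝ, (∀ i, 0 ≤ x i) → f x = ((g x : ℝ) : EReal))
    (hf_out : ∀ x : Fin N → ℝ, ¬ (∀ i, 0 ≤ x i) → f x = ⊤)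
    (d : Fin N → ℝ) (hd : ∀ i, 0 ≤ d i) :
    Filter.liminf
        (fun q : ℝ × (Fin N → ℝ) => f (q.1 • q.2) / ((q.1 : ℝ) : EReal))
        ((atTop : Filter ℝ) ×ˢ 𝓝 d)
      = sInf {z : EReal |
          ∃ x : Fin N → ℝ, (∀ i, 0 ≤ x i) ∧ z = ((g (x + d) - g x : ℝ) : EReal)} := by
  set u : ℝ × (Fin N → ℝ) → EReal :=
    fun q : ℝ × (Fin N → ℝ) => f (q.1 • q.2) / ((q.1 : ℝ) : EReal) with hu
  set F : Filter (ℝ × (Fin N → ℝ)) := (atTop : Filter ℝ) ×ˢ 𝓝 d with hF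
  -- the real infimum
  set T : Set ℝ := {z : ℝ | ∃ x : Fin N → ℝ, (∀ i, 0 ≤ x i) ∧ z = g (x + d) - g x}
    with hTdef
  have hTne : T.Nonempty := ⟨g (0 + d) - g 0, 0, fun i => le_refl 0, rfl⟩
  have hTbd : BddBelow T := by
    refine ⟨0, ?_⟩
    rintro z ⟨x, hx, rfl⟩
    have := aux_mono hconc hnonneg hx hd
    linarith
  set m : ℝ := sInf T with hmdef
  have hm_le : ∀ x : Fin N → ℝ, (∀ i, 0 ≤ x i) → m ≤ g (x + d) - g x :=
    fun x hx => csInf_le hTbd ⟨x, hx, rfl⟩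
  have hm0 : 0 ≤ m := by
    apply le_csInf hTne
    rintro z ⟨x, hx, rfl⟩
    have := aux_mono hconc hnonneg hx hd
    linarith
  -- telescoping along the direction d
  have htel : ∀ n : ℕ, (n:ℝ) * m ≤ g ((n:ℝ) • d) := by
    intro n
    induction n with
    | zero => simpa using hnonneg 0 (fun i => le_refl 0)
    | succ n ih =>
      have hnd : ∀ i, 0 ≤ ((n:ℝ) • d) i := fun i =>
        mul_nonneg (Nat.cast_nonneg n) (hd i)
      have h1 := hm_le ((n:ℝ) • d) hnd
      have h2 : ((n:ℝ) • d) + d = (((n+1:ℕ)):ℝ) • d := by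
        push_cast
        rw [add_smul, one_smul]
      rw [h2] at h1
      push_cast at ih h1 ⊢
      linarith
  have hscale : ∀ s : ℝ, 0 ≤ s → (s - 1) * m ≤ g (s • d) := by
    intro s hs
    have h1 : ((⌊s⌋₊ : ℝ)) * m ≤ g ((⌊s⌋₊:ℝ) • d) := htel _
    have h2 : g ((⌊s⌋₊:ℝ) • d) ≤ g (s • d) := by
      refine aux_mono' hconc hnonneg (fun i => mul_nonneg (Nat.cast_nonneg _) (hd i))
        (fun i => ?_)
      simp only [Pi.smul_apply, smul_eq_mul]
      exact mul_le_mul_of_nonneg_right (Nat.floor_le hs) (hd i)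
    have h3 : s - 1 ≤ ((⌊s⌋₊:ℝ)) := (Nat.sub_one_lt_floor s).le
    nlinarith [mul_le_mul_of_nonneg_right h3 hm0]
  -- identify the RHS with the real infimum
  have hRHS : sInf {z : EReal |
      ∃ x : Fin N → ℝ, (∀ i, 0 ≤ x i) ∧ z = ((g (x + d) - g x : ℝ) : EReal)}
      = ((m : ℝ) : EReal) := by
    apply le_antisymm
    · rw [← EReal.le_of_forall_lt_iff_le]
      intro z hz
      have hmz : m < z := by exact_mod_cast hz
      obtain ⟨w, ⟨x, hx, rfl⟩, hw⟩ : ∃ w ∈ T, w < z := exists_lt_of_csInf_lt hTne hmz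
      refine le_trans (sInf_le ⟨x, hx, rfl⟩) ?_
      exact_mod_cast hw.le
    · apply le_sInf
      rintro z ⟨x, hx, rfl⟩
      exact_mod_cast hm_le x hx
  rw [hRHS]
  -- liminf ≤ m
  have htends : Tendsto (fun t : ℝ => (t, d)) atTop F :=
    tendsto_id.prodMk tendsto_const_nhds
  have hle : Filter.liminf u F ≤ ((m:ℝ) : EReal) := by
    rw [← EReal.le_of_forall_lt_iff_le]
    intro z hz
    have hmz : m < z := by exact_mod_cast hz
    obtain ⟨w, ⟨x, hx, rfl⟩, hwz⟩ : ∃ w ∈ T, w < z := exists_lt_of_csInf_lt hTne hmz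
    set ε : ℝ := z - (g (x + d) - g x) with hε
    have hε0 : 0 < ε := sub_pos.mpr hwz
    apply Filter.liminf_le_of_frequently_le'
    apply htends.frequently
    apply Filter.Eventually.frequently
    filter_upwards [eventually_ge_atTop (max 1 (g x / ε + 1))] with t ht
    have ht1 : 1 ≤ t := le_trans (le_max_left _ _) ht
    have ht0 : (0:ℝ) < t := lt_of_lt_of_le one_pos ht1
    have htd : ∀ i, 0 ≤ (t • d) i := fun i => mul_nonneg ht0.le (hd i)
    show f (t • d) / ((t:ℝ) : EReal) ≤ ((z:ℝ) : EReal)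
    rw [hf_dom _ htd, ← EReal.coe_div, EReal.coe_le_coe_iff]
    have h1 : g (t • d) ≤ g (x + t • d) := by
      refine aux_mono' hconc hnonneg htd (fun i => ?_)
      have : 0 ≤ x i := hx i
      simp only [Pi.add_apply, Pi.smul_apply, smul_eq_mul]
      linarith
    have h2 : g (x + t • d) ≤ g x + t * (g (x + d) - g x) := aux_slope hconc hx hd ht1
    have hgx : g x < t * ε := by
      have hlt : g x / ε < t :=
        lt_of_lt_of_le (lt_add_one _) (le_trans (le_max_right _ _) ht)
      calc g x = g x / ε * ε := by field_simp
        _ < t * ε := by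
          exact mul_lt_mul_of_pos_right hlt hε0
    rw [div_le_iff₀ ht0]
    have hz' : z * t = t * (g (x + d) - g x) + t * ε := by rw [hε]; ring
    linarith
  apply le_antisymm hle
  -- 0 ≤ liminf
  have hge0 : (0 : EReal) ≤ Filter.liminf u F := by
    refine le_liminf_of_le (by isBoundedDefault) ?_
    filter_upwards [(eventually_ge_atTop (1:ℝ)).prod_inl (𝓝 d)] with q hq
    obtain ⟨t, y⟩ := q
    simp only at hq
    have ht0 : (0:ℝ) < t := lt_of_lt_of_le one_pos hq
    by_cases hy : ∀ i, 0 ≤ y i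
    · have hty : ∀ i, 0 ≤ (t • y) i := fun i => mul_nonneg ht0.le (hy i)
      show (0 : EReal) ≤ f (t • y) / ((t:ℝ) : EReal)
      rw [hf_dom _ hty, ← EReal.coe_div]
      exact_mod_cast div_nonneg (hnonneg _ hty) ht0.le
    · have hty : ¬ (∀ i, 0 ≤ (t • y) i) := by
        push_neg at hy ⊢
        obtain ⟨i, hi⟩ := hy
        exact ⟨i, mul_neg_of_pos_of_neg ht0 hi⟩
      show (0 : EReal) ≤ f (t • y) / ((t:ℝ) : EReal)
      rw [hf_out _ hty, EReal.top_div_of_pos_ne_top (by exact_mod_cast ht0)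
        (EReal.coe_ne_top t)]
      exact le_top
  -- main lower bound
  have hmain : ∀ c : ℝ, 0 < c → c < m → ((c:ℝ) : EReal) ≤ Filter.liminf u F := by
    intro c hc0 hcm
    have hm0' : (0:ℝ) < m := lt_trans hc0 hcm
    set δ : ℝ := (m - c) / (2 * m) with hδ
    have hδ0 : 0 < δ := div_pos (sub_pos.mpr hcm) (by linarith)
    have hδ1 : δ < 1 := by
      rw [hδ, div_lt_one (by linarith)]
      linarith
    refine le_liminf_of_le (by isBoundedDefault) ?_
    have hev2 : ∀ᶠ y in 𝓝 d, ∀ i, d i = 0 ∨ (1-δ) * d i < y i := by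
      rw [eventually_all]
      intro i
      by_cases hdi : d i = 0
      · exact Filter.Eventually.of_forall (fun y => Or.inl hdi)
      · have hdi' : 0 < d i := lt_of_le_of_ne (hd i) (Ne.symm hdi)
        have hlt : (1-δ) * d i < d i := by nlinarith
        exact (((continuous_apply i).tendsto d).eventually_const_lt hlt).mono
          (fun y h => Or.inr h)
    filter_upwards [(eventually_ge_atTop (max 1 (2*m/(m-c)))).prod_inl (𝓝 d),
      hev2.prod_inr atTop] with q hq1 hq2
    obtain ⟨t, y⟩ := q
    simp only at hq1 hq2
    have ht1 : (1:ℝ) ≤ t := le_trans (le_max_left _ _) hq1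
    have ht0 : (0:ℝ) < t := lt_of_lt_of_le one_pos ht1
    by_cases hy : ∀ i, 0 ≤ y i
    · have hty : ∀ i, 0 ≤ (t • y) i := fun i => mul_nonneg ht0.le (hy i)
      show ((c:ℝ) : EReal) ≤ f (t • y) / ((t:ℝ) : EReal)
      rw [hf_dom _ hty, ← EReal.coe_div, EReal.coe_le_coe_iff]
      have hyd : ∀ i, (1-δ) * d i ≤ y i := fun i =>
        (hq2 i).elim (fun h => by rw [h]; simpa using hy i) le_of_lt
      have hcmp : ∀ i, (((1-δ)*t) • d) i ≤ (t • y) i := by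
        intro i
        simp only [Pi.smul_apply, smul_eq_mul]
        nlinarith [hyd i, hd i, ht0.le]
      have h1 : g (((1-δ)*t) • d) ≤ g (t • y) :=
        aux_mono' hconc hnonneg
          (fun i => mul_nonneg (mul_nonneg (by linarith) ht0.le) (hd i)) hcmp
      have h2 : ((1-δ)*t - 1) * m ≤ g (((1-δ)*t) • d) :=
        hscale _ (mul_nonneg (by linarith) ht0.le)
      rw [le_div_iff₀ ht0]
      have hT : 2*m/(m-c) ≤ t := le_trans (le_max_right _ _) hq1
      have hT' : 2*m ≤ t * (m - c) := by
        rw [div_le_iff₀ (by linarith : (0:ℝ) < m - c)] at hT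
        linarith
      have hδm : (1-δ) * m = (m+c)/2 := by
        rw [hδ]
        field_simp
        ring
      have key : ((1-δ)*t - 1) * m = (m+c)/2 * t - m := by
        rw [show ((1-δ)*t - 1) * m = ((1-δ)*m)*t - m from by ring, hδm]
      rw [key] at h2
      linarith
    · have hty : ¬ (∀ i, 0 ≤ (t • y) i) := by
        push_neg at hy ⊢
        obtain ⟨i, hi⟩ := hy
        exact ⟨i, mul_neg_of_pos_of_neg ht0 hi⟩
      show ((c:ℝ) : EReal) ≤ f (t • y) / ((t:ℝ) : EReal)
      rw [hf_out _ hty, EReal.top_div_of_pos_ne_top (by exact_mod_cast ht0)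
        (EReal.coe_ne_top t)]
      exact le_top
  apply le_of_forall_lt
  intro b hb
  obtain ⟨c, hbc, hcm⟩ := EReal.exists_between_coe_real hb
  rcases le_or_gt c 0 with h | h
  · refine lt_of_lt_of_le hbc (le_trans ?_ hge0)
    exact_mod_cast h
  · exact lt_of_lt_of_le hbc (hmain c h (by exact_mod_cast hcm))
end

section
/- Let S : ℝ₊^N → ℝ₊^N be continuous, monotone, and positively homogeneous (S(tx) = tS(x) for all t > 0), let ε > 0, and set T_ε(x) = S(x) + ε·1. Let ‖·‖ be a monotone norm on ℝ^N and let p > 0. Then for every initial point x₁ ∈ ℝ₊^N, the sequence defined by x_{n+1} = (p/‖T_ε(x_n)‖)·T_ε(x_n) converges to a point x_p ∈ ℝ₊₊^N satisfying T_ε(x_p) = (‖T_ε(x_p)‖/p)·x_p and ‖x_p‖ = p. -/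
open Filter Topology

/-!
Call `u, v ≥ 0` comparable with constants `a, b ≥ 1` if `u ≤ a • v` and `v ≤ b • u`. Monotonicity
and homogeneity give `S u ≤ a • S v`, and adding `ε • 1` improves the constant: if `S v ≤ β`
then `T u ≤ (1 + κ (a - 1)) • T v` with `κ = β / (β + ε) < 1`. Normalising both sides to norm
`p` rescales the two constants inversely, so their product obeys `a' b' - 1 ≤ κ (a b - 1)`.

Along the iteration such a `β` exists: an iterate of norm `p` lies below the vector `C` with
`C i = p / ‖e i‖`, so `S` of it is at most `‖S C‖∞`, and the next iterate is then bounded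
below by `p ε / ((β + ε) ‖1‖) > 0`. Consecutive iterates are therefore comparable with
`a b - 1` decaying like `κ ^ n`, which makes the sequence Cauchy; its limit is positive, and by
continuity of `S` it is a fixed point of the normalised map.
-/

lemma add_le_mul_add_of_le_mul {s t a β ε : ℝ} (hs : s ≤ a * t) (ht₀ : 0 ≤ t) (htβ : t ≤ β)
    (ha : 1 ≤ a) (hε : 0 < ε) : s + ε ≤ (1 + β / (β + ε) * (a - 1)) * (t + ε) := by
  have hβε : 0 < β + ε := by linarith
  have ht : t ≤ β * (t + ε) / (β + ε) := by rw [le_div_iff₀ hβε]; nlinarith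
  calc s + ε ≤ t + ε + (a - 1) * t := by linarith
    _ ≤ t + ε + (a - 1) * (β * (t + ε) / (β + ε)) := by gcongr
    _ = (1 + β / (β + ε) * (a - 1)) * (t + ε) := by field_simp

/-- The difference of the two sides is `κ (1 - κ) (a - 1) (b - 1)`. -/
lemma one_add_mul_sub_one_mul_le {κ a b : ℝ} (hκ₀ : 0 ≤ κ) (hκ₁ : κ ≤ 1) (ha : 1 ≤ a)
    (hb : 1 ≤ b) : (1 + κ * (a - 1)) * (1 + κ * (b - 1)) ≤ 1 + κ * (a * b - 1) := by
  nlinarith [mul_nonneg (mul_nonneg hκ₀ (sub_nonneg.mpr hκ₁))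
    (mul_nonneg (sub_nonneg.mpr ha) (sub_nonneg.mpr hb))]

lemma isFixedPt_of_tendsto_of_continuousWithinAt {X : Type*} [TopologicalSpace X] [T2Space X]
    {f : X → X} {s : Set X} {y : ℕ → X} {a : X} (hy : Tendsto y atTop (𝓝 a))
    (hys : ∀ n, y n ∈ s) (hf : ContinuousWithinAt f s a) (hrec : ∀ n, y (n + 1) = f (y n)) :
    Function.IsFixedPt f a := by
  have hfy : Tendsto (fun n => f (y n)) atTop (𝓝 (f a)) :=
    hf.tendsto.comp (tendsto_nhdsWithin_iff.2 ⟨hy, Eventually.of_forall hys⟩)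
  refine tendsto_nhds_unique hfy ?_
  simpa only [← hrec] using (tendsto_add_atTop_iff_nat 1).2 hy

namespace Seminorm

variable {E : Type*} [AddCommGroup E] [Module ℝ E]

noncomputable def normalizeTo (q : Seminorm ℝ E) (p : ℝ) (w : E) : E := (p / q w) • w

lemma map_normalizeTo (q : Seminorm ℝ E) {p : ℝ} (hp : 0 ≤ p) {w : E} (hw : q w ≠ 0) :
    q (q.normalizeTo p w) = p := by
  rw [normalizeTo, map_smul_eq_mul, Real.norm_of_nonneg (div_nonneg hp (apply_nonneg q w)),
    div_mul_cancel₀ p hw]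

lemma eq_smul_of_normalizeTo_eq (q : Seminorm ℝ E) {p : ℝ} (hp : p ≠ 0) {w v : E}
    (hw : q w ≠ 0) (h : q.normalizeTo p w = v) : w = (q w / p) • v := by
  rw [← h, normalizeTo, smul_smul, div_mul_div_cancel₀ hp, div_self hw, one_smul]

end Seminorm

lemma Seminorm.continuous_of_finiteDimensional {E : Type*} [NormedAddCommGroup E]
    [NormedSpace ℝ E] [FiniteDimensional ℝ E] (q : Seminorm ℝ E) : Continuous q :=
  continuousOn_univ.mp (q.convexOn.continuousOn isOpen_univ)

lemma ContinuousWithinAt.seminorm_normalizeTo {X E : Type*} [TopologicalSpace X]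
    [NormedAddCommGroup E] [NormedSpace ℝ E] [FiniteDimensional ℝ E] (q : Seminorm ℝ E)
    (p : ℝ) {f : X → E} {s : Set X} {x : X} (hf : ContinuousWithinAt f s x) (hx : q (f x) ≠ 0) :
    ContinuousWithinAt (fun z => q.normalizeTo p (f z)) s x :=
  (continuousWithinAt_const.div
    (q.continuous_of_finiteDimensional.continuousAt.comp_continuousWithinAt hf) hx).smul hf

section NonnegCone

variable {ι : Type*}

lemma le_div_smul_of_le_of_le {u v : ι → ℝ} {c D : ℝ} (hc : 0 < c) (hD : 0 ≤ D)
    (hu : ∀ i, u i ≤ D) (hv : ∀ i, c ≤ v i) : u ≤ (D / c) • v := fun i =>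
  calc u i ≤ D := hu i
    _ = D / c * c := by field_simp
    _ ≤ D / c * v i := mul_le_mul_of_nonneg_left (hv i) (div_nonneg hD hc.le)

lemma abs_sub_le_of_le_smul {u v : ι → ℝ} {a b D : ℝ} (hu : 0 ≤ u)
    (huD : ∀ i, u i ≤ D) (ha : 1 ≤ a) (hb : 1 ≤ b) (huv : u ≤ a • v) (hvu : v ≤ b • u)
    (i : ι) : |u i - v i| ≤ (a * b - 1) * D := by
  have h1 := huv i
  have h2 := hvu i
  have h3 := hu i
  simp only [Pi.smul_apply, smul_eq_mul, Pi.zero_apply] at h1 h2 h3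
  rw [abs_le]
  constructor <;> nlinarith [huD i, mul_le_mul_of_nonneg_left (huD i) (sub_nonneg.2 hb),
    mul_le_mul_of_nonneg_right (sub_nonneg.2 ha) (sub_nonneg.2 hb)]

lemma map_nonneg_of_monotone_homogeneous {S : (ι → ℝ) → ι → ℝ}
    (hS_mono : MonotoneOn S (Set.Ici 0))
    (hS_hom : ∀ t : ℝ, 0 < t → ∀ x : ι → ℝ, 0 ≤ x → S (t • x) = t • S x)
    {x : ι → ℝ} (hx : 0 ≤ x) : 0 ≤ S x := by
  have h0 : S 0 = 0 := by
    have h := hS_hom 2 two_pos 0 le_rfl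
    rw [smul_zero, two_smul] at h
    simpa using h
  exact h0 ▸ hS_mono Set.self_mem_Ici hx hx

lemma map_le_smul_map_of_le_smul {S : (ι → ℝ) → ι → ℝ}
    (hS_mono : MonotoneOn S (Set.Ici 0))
    (hS_hom : ∀ t : ℝ, 0 < t → ∀ x : ι → ℝ, 0 ≤ x → S (t • x) = t • S x)
    {u v : ι → ℝ} {a : ℝ} (hu : 0 ≤ u) (hv : 0 ≤ v) (ha : 0 < a) (h : u ≤ a • v) :
    S u ≤ a • S v :=
  hS_hom a ha v hv ▸ hS_mono hu (smul_nonneg ha.le hv) h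

lemma add_smul_one_le_smul_add_smul_one {S : (ι → ℝ) → ι → ℝ}
    (hS_mono : MonotoneOn S (Set.Ici 0))
    (hS_hom : ∀ t : ℝ, 0 < t → ∀ x : ι → ℝ, 0 ≤ x → S (t • x) = t • S x)
    {ε β a : ℝ} (hε : 0 < ε) (ha : 1 ≤ a) {u v : ι → ℝ} (hu : 0 ≤ u) (hv : 0 ≤ v)
    (hSv : ∀ i, S v i ≤ β) (h : u ≤ a • v) :
    S u + ε • 1 ≤ (1 + β / (β + ε) * (a - 1)) • (S v + ε • 1) := fun i => by
  have hS := map_le_smul_map_of_le_smul hS_mono hS_hom hu hv (by linarith) h i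
  have h0 := map_nonneg_of_monotone_homogeneous hS_mono hS_hom hv i
  simp only [Pi.smul_apply, smul_eq_mul, Pi.add_apply, Pi.one_apply, mul_one,
    Pi.zero_apply] at hS h0 ⊢
  exact add_le_mul_add_of_le_mul hS h0 (hSv i) ha hε

namespace Seminorm

variable (q : Seminorm ℝ (ι → ℝ))

lemma normalizeTo_nonneg {p : ℝ} (hp : 0 ≤ p) {w : ι → ℝ} (hw : 0 ≤ w) :
    0 ≤ q.normalizeTo p w :=
  smul_nonneg (div_nonneg hp (apply_nonneg q w)) hw

lemma normalizeTo_le_smul_normalizeTo {p A : ℝ} (hp : 0 ≤ p) {w z : ι → ℝ} (hw : 0 < q w)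
    (hz : 0 < q z) (h : w ≤ A • z) :
    q.normalizeTo p w ≤ (A * q z / q w) • q.normalizeTo p z :=
  calc q.normalizeTo p w ≤ (p / q w) • (A • z) := smul_le_smul_of_nonneg_left h (by positivity)
    _ = (A * q z / q w) • q.normalizeTo p z := by
      rw [normalizeTo, smul_smul, smul_smul]; congr 1; field_simp

lemma one_le_of_le_smul (hq_mono : MonotoneOn q (Set.Ici 0)) {u v : ι → ℝ}
    {a : ℝ} (hu : 0 ≤ u) (ha : 0 ≤ a) (h : u ≤ a • v) (huv : q u = q v) (hv : 0 < q v) :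
    1 ≤ a := by
  have := hq_mono hu (hu.trans h) h
  rw [map_smul_eq_mul, Real.norm_of_nonneg ha, huv] at this
  exact le_of_mul_le_mul_right (by simpa using this) hv

lemma map_add_smul_one_pos
    (hq_mono : MonotoneOn q (Set.Ici 0)) (hq₁ : 0 < q 1)
    {ε : ℝ} (hε : 0 < ε) {w : ι → ℝ} (hw : 0 ≤ w) : 0 < q (w + ε • 1) := by
  have h₀ : (0 : ι → ℝ) ≤ ε • 1 := smul_nonneg hε.le zero_le_one
  have hle : ε • (1 : ι → ℝ) ≤ w + ε • 1 := le_add_of_nonneg_left hw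
  have := hq_mono h₀ (h₀.trans hle) hle
  rw [map_smul_eq_mul, Real.norm_of_nonneg hε.le] at this
  exact (mul_pos hε hq₁).trans_le this

lemma apply_le_div_map_single [DecidableEq ι]
    (hq_mono : MonotoneOn q (Set.Ici 0)) {y : ι → ℝ} (hy : 0 ≤ y) (i : ι)
    (hi : 0 < q (Pi.single i 1)) : y i ≤ q y / q (Pi.single i 1) := by
  have hle : Pi.single i (y i) ≤ y := fun j => by
    rcases eq_or_ne j i with rfl | hj
    · simp
    · simpa [hj] using hy j
  have hsingle : Pi.single i (y i) = y i • Pi.single i (1 : ℝ) := by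
    rw [← Pi.single_smul', smul_eq_mul, mul_one]
  have := hq_mono (Pi.single_nonneg.2 (hy i)) hy hle
  rwa [hsingle, map_smul_eq_mul, Real.norm_of_nonneg (hy i), ← le_div_iff₀ hi] at this

lemma div_le_normalizeTo_add_smul_one
    (hq_mono : MonotoneOn q (Set.Ici 0)) {p ε β : ℝ} (hp : 0 ≤ p)
    (hε : 0 < ε) (hβ : 0 ≤ β) {w : ι → ℝ} (hw : 0 ≤ w) (hwβ : ∀ i, w i ≤ β)
    (hq : 0 < q (w + ε • 1)) (i : ι) :
    p * ε / ((β + ε) * q 1) ≤ q.normalizeTo p (w + ε • 1) i := by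
  have hle : q (w + ε • 1) ≤ (β + ε) * q 1 := by
    have hT : 0 ≤ w + ε • 1 := add_nonneg hw (smul_nonneg hε.le zero_le_one)
    have hTβ : w + ε • 1 ≤ (β + ε) • 1 := fun j => by simpa using hwβ j
    have := hq_mono hT (hT.trans hTβ) hTβ
    rwa [map_smul_eq_mul, Real.norm_of_nonneg (by linarith)] at this
  calc p * ε / ((β + ε) * q 1) ≤ p * ε / q (w + ε • 1) :=
        div_le_div_of_nonneg_left (by positivity) hq hle
    _ = p / q (w + ε • 1) * ε := by ring
    _ ≤ p / q (w + ε • 1) * (w i + ε) := by gcongr; exact le_add_of_nonneg_left (hw i)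
    _ = q.normalizeTo p (w + ε • 1) i := by simp [normalizeTo]

end Seminorm

theorem exists_le_smul_normalizeTo_of_le_smul (q : Seminorm ℝ (ι → ℝ))
    (hq_mono : MonotoneOn q (Set.Ici 0)) (hq₁ : 0 < q 1)
    {S : (ι → ℝ) → ι → ℝ} (hS_mono : MonotoneOn S (Set.Ici 0))
    (hS_hom : ∀ t : ℝ, 0 < t → ∀ x : ι → ℝ, 0 ≤ x → S (t • x) = t • S x)
    {ε p β : ℝ} (hε : 0 < ε) (hp : 0 < p) (hβ : 0 ≤ β) {u v : ι → ℝ} (hu : 0 ≤ u)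
    (hv : 0 ≤ v) (hSu : ∀ i, S u i ≤ β) (hSv : ∀ i, S v i ≤ β) {a b : ℝ} (ha : 1 ≤ a)
    (hb : 1 ≤ b) (huv : u ≤ a • v) (hvu : v ≤ b • u) :
    ∃ a' b', 1 ≤ a' ∧ 1 ≤ b' ∧ a' * b' ≤ 1 + β / (β + ε) * (a * b - 1) ∧
      q.normalizeTo p (S u + ε • 1) ≤ a' • q.normalizeTo p (S v + ε • 1) ∧
      q.normalizeTo p (S v + ε • 1) ≤ b' • q.normalizeTo p (S u + ε • 1) := by
  have hκ₀ : 0 ≤ β / (β + ε) := by positivity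
  have hκ₁ : β / (β + ε) ≤ 1 := div_le_one_of_le₀ (by linarith) (by positivity)
  have hSu₀ := map_nonneg_of_monotone_homogeneous hS_mono hS_hom hu
  have hSv₀ := map_nonneg_of_monotone_homogeneous hS_mono hS_hom hv
  have hTu := add_nonneg hSu₀ (smul_nonneg hε.le (zero_le_one' (ι → ℝ)))
  have hTv := add_nonneg hSv₀ (smul_nonneg hε.le (zero_le_one' (ι → ℝ)))
  have hu' := q.map_add_smul_one_pos hq_mono hq₁ hε hSu₀
  have hv' := q.map_add_smul_one_pos hq_mono hq₁ hε hSv₀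
  have hFu := q.map_normalizeTo hp.le hu'.ne'
  have hFv := q.map_normalizeTo hp.le hv'.ne'
  have h₁ := q.normalizeTo_le_smul_normalizeTo hp.le hu' hv'
    (add_smul_one_le_smul_add_smul_one hS_mono hS_hom hε ha hu hv hSv huv)
  have h₂ := q.normalizeTo_le_smul_normalizeTo hp.le hv' hu'
    (add_smul_one_le_smul_add_smul_one hS_mono hS_hom hε hb hv hu hSu hvu)
  have hA : 0 ≤ 1 + β / (β + ε) * (a - 1) := by nlinarith
  have hB : 0 ≤ 1 + β / (β + ε) * (b - 1) := by nlinarith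
  refine ⟨_, _, q.one_le_of_le_smul hq_mono (q.normalizeTo_nonneg hp.le hTu) (by positivity) h₁
      (hFu.trans hFv.symm) (hFv.symm ▸ hp),
    q.one_le_of_le_smul hq_mono (q.normalizeTo_nonneg hp.le hTv) (by positivity) h₂
      (hFv.trans hFu.symm) (hFu.symm ▸ hp), ?_, h₁, h₂⟩
  calc _ = (1 + β / (β + ε) * (a - 1)) * (1 + β / (β + ε) * (b - 1)) := by
        field_simp
    _ ≤ _ := one_add_mul_sub_one_mul_le hκ₀ hκ₁ ha hb

theorem exists_ratio_bounds_iterate (q : Seminorm ℝ (ι → ℝ))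
    (hq_mono : MonotoneOn q (Set.Ici 0)) (hq₁ : 0 < q 1)
    {S : (ι → ℝ) → ι → ℝ} (hS_mono : MonotoneOn S (Set.Ici 0))
    (hS_hom : ∀ t : ℝ, 0 < t → ∀ x : ι → ℝ, 0 ≤ x → S (t • x) = t • S x)
    {ε p β : ℝ} (hε : 0 < ε) (hp : 0 < p) (hβ : 0 ≤ β) {y : ℕ → ι → ℝ}
    (hy : ∀ n, y (n + 1) = q.normalizeTo p (S (y n) + ε • 1)) (hy_nonneg : ∀ n, 0 ≤ y n)
    (hSy : ∀ n i, S (y n) i ≤ β) {a₀ b₀ : ℝ} (ha₀ : 1 ≤ a₀) (hb₀ : 1 ≤ b₀)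
    (h₀ : y 0 ≤ a₀ • y 1) (h₀' : y 1 ≤ b₀ • y 0) (n : ℕ) :
    ∃ a b, 1 ≤ a ∧ 1 ≤ b ∧ a * b ≤ 1 + (a₀ * b₀ - 1) * (β / (β + ε)) ^ n ∧
      y n ≤ a • y (n + 1) ∧ y (n + 1) ≤ b • y n := by
  induction n with
  | zero => exact ⟨a₀, b₀, ha₀, hb₀, by simp, h₀, h₀'⟩
  | succ n ih =>
    obtain ⟨a, b, ha, hb, hab, huv, hvu⟩ := ih
    obtain ⟨a', b', ha', hb', hab', h₁, h₂⟩ := exists_le_smul_normalizeTo_of_le_smul q hq_mono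
      hq₁ hS_mono hS_hom hε hp hβ (hy_nonneg n) (hy_nonneg (n + 1)) (hSy n) (hSy (n + 1))
      ha hb huv hvu
    rw [← hy n, ← hy (n + 1)] at h₁ h₂
    refine ⟨a', b', ha', hb', ?_, h₁, h₂⟩
    have hκ₀ : 0 ≤ β / (β + ε) := by positivity
    calc a' * b' ≤ 1 + β / (β + ε) * (a * b - 1) := hab'
      _ ≤ 1 + β / (β + ε) * ((a₀ * b₀ - 1) * (β / (β + ε)) ^ n) := by gcongr; linarith
      _ = _ := by ring

theorem iterate_nonneg (q : Seminorm ℝ (ι → ℝ)) {S : (ι → ℝ) → ι → ℝ}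
    (hS_mono : MonotoneOn S (Set.Ici 0))
    (hS_hom : ∀ t : ℝ, 0 < t → ∀ x : ι → ℝ, 0 ≤ x → S (t • x) = t • S x)
    {ε p : ℝ} (hε : 0 ≤ ε) (hp : 0 ≤ p) {y : ℕ → ι → ℝ}
    (hy : ∀ n, y (n + 1) = q.normalizeTo p (S (y n) + ε • 1)) (hy₀ : 0 ≤ y 0) (n : ℕ) :
    0 ≤ y n := by
  induction n with
  | zero => exact hy₀
  | succ n ih =>
    rw [hy]
    exact q.normalizeTo_nonneg hp (add_nonneg (map_nonneg_of_monotone_homogeneous hS_mono hS_hom ih)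
      (smul_nonneg hε zero_le_one))

variable [Fintype ι]

theorem cauchySeq_of_ratio_bounds [Nonempty ι] {y : ℕ → ι → ℝ} {D E κ : ℝ}
    (hy_nonneg : ∀ n, 0 ≤ y n) (hyD : ∀ n i, y n i ≤ D) (hD : 0 ≤ D) (hκ : κ < 1)
    (h : ∀ n, ∃ a b, 1 ≤ a ∧ 1 ≤ b ∧ a * b ≤ 1 + E * κ ^ n ∧
      y n ≤ a • y (n + 1) ∧ y (n + 1) ≤ b • y n) :
    CauchySeq y := by
  refine cauchySeq_of_le_geometric κ (E * D) hκ fun n => dist_pi_le_iff'.2 fun i => ?_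
  obtain ⟨a, b, ha, hb, hab, huv, hvu⟩ := h n
  calc dist (y n i) (y (n + 1) i) ≤ (a * b - 1) * D :=
        abs_sub_le_of_le_smul (hy_nonneg n) (hyD n) ha hb huv hvu i
    _ ≤ E * κ ^ n * D := by gcongr; linarith
    _ = E * D * κ ^ n := by ring

theorem exists_bounds_iterate [Nonempty ι] [DecidableEq ι] (q : Seminorm ℝ (ι → ℝ))
    (hq_mono : MonotoneOn q (Set.Ici 0)) (hq_pos : ∀ z, z ≠ 0 → 0 < q z)
    {S : (ι → ℝ) → ι → ℝ} (hS_mono : MonotoneOn S (Set.Ici 0))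
    (hS_hom : ∀ t : ℝ, 0 < t → ∀ x : ι → ℝ, 0 ≤ x → S (t • x) = t • S x)
    {ε p : ℝ} (hε : 0 < ε) (hp : 0 < p) {y : ℕ → ι → ℝ}
    (hy : ∀ n, y (n + 1) = q.normalizeTo p (S (y n) + ε • 1)) (hy_nonneg : ∀ n, 0 ≤ y n) :
    ∃ c D β, 0 < c ∧ 0 ≤ D ∧ 0 ≤ β ∧
      ∀ n i, c ≤ y (n + 2) i ∧ y (n + 1) i ≤ D ∧ S (y (n + 1)) i ≤ β := by
  have hq₁ := hq_pos 1 one_ne_zero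
  have hT : ∀ n, 0 < q (S (y n) + ε • 1) := fun n => q.map_add_smul_one_pos hq_mono hq₁ hε
    (map_nonneg_of_monotone_homogeneous hS_mono hS_hom (hy_nonneg n))
  set C : ι → ℝ := fun i => p / q (Pi.single i 1)
  have hC : 0 ≤ C := fun i => div_nonneg hp.le (apply_nonneg q _)
  have hyC : ∀ n, y (n + 1) ≤ C := fun n i => by
    have hq : q (y (n + 1)) = p := hy n ▸ q.map_normalizeTo hp.le (hT n).ne'
    have := q.apply_le_div_map_single hq_mono (hy_nonneg (n + 1)) i (hq_pos _ (by simp))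
    rwa [hq] at this
  have hle_norm (v : ι → ℝ) (i : ι) : v i ≤ ‖v‖ :=
    (Real.le_norm_self _).trans (norm_le_pi_norm v i)
  have hSy : ∀ n i, S (y (n + 1)) i ≤ ‖S C‖ := fun n i =>
    (hS_mono (hy_nonneg _) hC (hyC n) i).trans (hle_norm _ i)
  refine ⟨p * ε / ((‖S C‖ + ε) * q 1), ‖C‖, ‖S C‖, ?_, norm_nonneg _, norm_nonneg _,
    fun n i => ⟨?_, (hyC n i).trans (hle_norm C i), hSy n i⟩⟩
  · positivity
  · rw [hy (n + 1)]
    exact q.div_le_normalizeTo_add_smul_one hq_mono hp.le hε (norm_nonneg _)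
      (map_nonneg_of_monotone_homogeneous hS_mono hS_hom (hy_nonneg _)) (hSy n) (hT _) i

theorem exists_pos_tendsto_iterate [Nonempty ι] [DecidableEq ι] (q : Seminorm ℝ (ι → ℝ))
    (hq_mono : MonotoneOn q (Set.Ici 0)) (hq_pos : ∀ z, z ≠ 0 → 0 < q z)
    {S : (ι → ℝ) → ι → ℝ} (hS_mono : MonotoneOn S (Set.Ici 0))
    (hS_hom : ∀ t : ℝ, 0 < t → ∀ x : ι → ℝ, 0 ≤ x → S (t • x) = t • S x)
    {ε p : ℝ} (hε : 0 < ε) (hp : 0 < p) {y : ℕ → ι → ℝ}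
    (hy : ∀ n, y (n + 1) = q.normalizeTo p (S (y n) + ε • 1)) (hy_nonneg : ∀ n, 0 ≤ y n) :
    ∃ z : ι → ℝ, (∀ i, 0 < z i) ∧ Tendsto y atTop (𝓝 z) := by
  obtain ⟨c, D, β, hc, hD, hβ, hbd⟩ :=
    exists_bounds_iterate q hq_mono hq_pos hS_mono hS_hom hε hp hy hy_nonneg
  obtain ⟨i₀⟩ := ‹Nonempty ι›
  have ha₀ : 1 ≤ D / c := (one_le_div hc).2 (((hbd 0 i₀).1).trans (hbd 1 i₀).2.1)
  have hratio (m n : ℕ) : y (m + 2) ≤ (D / c) • y (n + 2) :=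
    le_div_smul_of_le_of_le hc hD (fun i => (hbd (m + 1) i).2.1) (fun i => (hbd n i).1)
  have hcauchy : CauchySeq fun n => y (n + 2) :=
    cauchySeq_of_ratio_bounds (fun n => hy_nonneg _) (fun n i => (hbd (n + 1) i).2.1) hD
      ((div_lt_one (by linarith)).2 (by linarith))
      (exists_ratio_bounds_iterate q hq_mono (hq_pos 1 one_ne_zero) hS_mono hS_hom hε hp hβ
        (fun n => hy (n + 2)) (fun n => hy_nonneg _) (fun n i => (hbd (n + 1) i).2.2) ha₀ ha₀
        (hratio 0 1) (hratio 1 0))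
  obtain ⟨z, hz⟩ := cauchySeq_tendsto_of_complete hcauchy
  refine ⟨z, fun i => hc.trans_le ?_, (tendsto_add_atTop_iff_nat 2).1 hz⟩
  exact ge_of_tendsto (((continuous_apply i).tendsto z).comp hz)
    (Eventually.of_forall fun n => (hbd n i).1)

end NonnegCone

theorem stmt_2_general (N : ℕ) (hN : 1 ≤ N)
    (S : (Fin N → ℝ) → (Fin N → ℝ))
    (hS_cont : ContinuousOn S {x : Fin N → ℝ | ∀ i, 0 ≤ x i})
    (hS_mono : ∀ x y : Fin N → ℝ, (∀ i, 0 ≤ x i) → (∀ i, 0 ≤ y i) → x ≤ y → S x ≤ S y)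
    (hS_hom : ∀ t : ℝ, 0 < t → ∀ x : Fin N → ℝ, (∀ i, 0 ≤ x i) → S (t • x) = t • S x)
    (ε : ℝ) (hε : 0 < ε)
    (Tε : (Fin N → ℝ) → (Fin N → ℝ))
    (hTε : ∀ x, Tε x = S x + ε • (1 : Fin N → ℝ))
    (nrm : (Fin N → ℝ) → ℝ)
    (hnrm_zero : ∀ x, nrm x = 0 ↔ x = 0)
    (hnrm_smul : ∀ (a : ℝ) (x : Fin N → ℝ), nrm (a • x) = |a| * nrm x)
    (hnrm_add : ∀ x y : Fin N → ℝ, nrm (x + y) ≤ nrm x + nrm y)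
    (hnrm_mono : ∀ x y : Fin N → ℝ, (0 : Fin N → ℝ) ≤ x → x ≤ y → nrm x ≤ nrm y)
    (p : ℝ) (hp : 0 < p)
    (x : ℕ → (Fin N → ℝ))
    (hx_init : ∀ i, 0 ≤ x 0 i)
    (hx_rec : ∀ n : ℕ, x (n + 1) = (p / nrm (Tε (x n))) • Tε (x n)) :
    ∃ xp : Fin N → ℝ, (∀ i, 0 < xp i) ∧
      Tε xp = (nrm (Tε xp) / p) • xp ∧
      nrm xp = p ∧
      Tendsto x atTop (𝓝 xp) := by
  obtain rfl : Tε = fun y => S y + ε • 1 := funext hTε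
  obtain ⟨q, rfl⟩ : ∃ q : Seminorm ℝ (Fin N → ℝ), ⇑q = nrm :=
    ⟨Seminorm.of nrm hnrm_add (by simpa only [Real.norm_eq_abs] using hnrm_smul), rfl⟩
  have : Nonempty (Fin N) := ⟨⟨0, hN⟩⟩
  have hq_pos (z : Fin N → ℝ) (hz : z ≠ 0) : 0 < q z :=
    (apply_nonneg q z).lt_of_ne' (mt (hnrm_zero z).1 hz)
  have hq_mono : MonotoneOn q (Set.Ici 0) := fun y hy z _ hyz => hnrm_mono y z hy hyz
  replace hS_mono : MonotoneOn S (Set.Ici 0) := fun y hy z hz hyz => hS_mono y z hy hz hyz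
  have hx_nonneg := iterate_nonneg q hS_mono hS_hom hε.le hp.le hx_rec hx_init
  obtain ⟨xp, hxp_pos, hxp⟩ :=
    exists_pos_tendsto_iterate q hq_mono hq_pos hS_mono hS_hom hε hp hx_rec hx_nonneg
  have hTxp : q (S xp + ε • 1) ≠ 0 := (q.map_add_smul_one_pos hq_mono (hq_pos 1 one_ne_zero) hε
    (map_nonneg_of_monotone_homogeneous hS_mono hS_hom fun i => (hxp_pos i).le)).ne'
  have hfix : q.normalizeTo p (S xp + ε • 1) = xp :=
    isFixedPt_of_tendsto_of_continuousWithinAt hxp hx_nonneg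
      (((hS_cont xp fun i => (hxp_pos i).le).add continuousWithinAt_const).seminorm_normalizeTo
        q p hTxp) hx_rec
  exact ⟨xp, hxp_pos, q.eq_smul_of_normalizeTo_eq hp.ne' hTxp hfix,
    hfix ▸ q.map_normalizeTo hp.le hTxp, hxp⟩

/-- For `T_ε(x) = S(x) + ε·1` with `S` continuous, monotone and positively homogeneous,
a monotone norm `nrm` and `p > 0`, the normalized fixed point iteration
`x_{n+1} = (p/‖T_ε(x_n)‖)·T_ε(x_n)` converges, from any initial point in `ℝ₊^N`, to a
point `x_p ∈ ℝ₊₊^N` with `T_ε(x_p) = (‖T_ε(x_p)‖/p)·x_p` and `‖x_p‖ = p`. -/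
theorem stmt_2 (N : ℕ) (hN : 1 ≤ N)
    (S : (Fin N → ℝ) → (Fin N → ℝ))
    (hS_nonneg : ∀ x : Fin N → ℝ, (∀ i, 0 ≤ x i) → ∀ i, 0 ≤ S x i)
    (hS_cont : ContinuousOn S {x : Fin N → ℝ | ∀ i, 0 ≤ x i})
    (hS_mono : ∀ x y : Fin N → ℝ, (∀ i, 0 ≤ x i) → (∀ i, 0 ≤ y i) → x ≤ y → S x ≤ S y)
    (hS_hom : ∀ t : ℝ, 0 < t → ∀ x : Fin N → ℝ, (∀ i, 0 ≤ x i) → S (t • x) = t • S x)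
    (ε : ℝ) (hε : 0 < ε)
    (Tε : (Fin N → ℝ) → (Fin N → ℝ))
    (hTε : ∀ x, Tε x = S x + ε • (1 : Fin N → ℝ))
    (nrm : (Fin N → ℝ) → ℝ)
    (hnrm_zero : ∀ x, nrm x = 0 ↔ x = 0)
    (hnrm_smul : ∀ (a : ℝ) (x : Fin N → ℝ), nrm (a • x) = |a| * nrm x)
    (hnrm_add : ∀ x y : Fin N → ℝ, nrm (x + y) ≤ nrm x + nrm y)
    (hnrm_mono : ∀ x y : Fin N → ℝ, (0 : Fin N → ℝ) ≤ x → x ≤ y → nrm x ≤ nrm y)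
    (p : ℝ) (hp : 0 < p)
    (x : ℕ → (Fin N → ℝ))
    (hx_init : ∀ i, 0 ≤ x 0 i)
    (hx_rec : ∀ n : ℕ, x (n + 1) = (p / nrm (Tε (x n))) • Tε (x n)) :
    ∃ xp : Fin N → ℝ, (∀ i, 0 < xp i) ∧
      Tε xp = (nrm (Tε xp) / p) • xp ∧
      nrm xp = p ∧
      Tendsto x atTop (𝓝 xp) :=
  stmt_2_general N hN S hS_cont hS_mono hS_hom ε hε Tε hTε nrm hnrm_zero hnrm_smul hnrm_add
    hnrm_mono p hp x hx_init hx_rec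
end

section
/- Let S : ℝ₊^N → ℝ₊^N be continuous, monotone, and positively homogeneous (S(tx) = tS(x) for all t > 0), let ε > 0, set T_ε(x) = S(x) + ε·1, and let ‖·‖ be a monotone norm on ℝ^N. Fix p > 0 and suppose x_p ∈ ℝ₊₊^N satisfies T_ε(x_p) = (‖T_ε(x_p)‖/p)·x_p and ‖x_p‖ = p. Then every λ ≥ 0 for which there exists u ∈ ℝ₊^N \ {0} with S(u) = λu satisfies λ ≤ ‖T_ε(x_p)‖/p. In particular, the spectral radius ρ(S) satisfies ρ(S) ≤ ‖T_ε(x_p)‖/p. -/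
open Filter Topology

/-- For `T_ε(x) = S(x) + ε·1` and a normalized fixed point `x_p` of the associated
conditional eigenvalue problem, `‖T_ε(x_p)‖/p` upper bounds every nonlinear eigenvalue
of `S`, hence it upper bounds the spectral radius `ρ(S)`. -/
theorem stmt_3 (N : ℕ) (hN : 1 ≤ N)
    (S : (Fin N → ℝ) → (Fin N → ℝ))
    (hS_nonneg : ∀ x : Fin N → ℝ, (∀ i, 0 ≤ x i) → ∀ i, 0 ≤ S x i)
    (hS_cont : ContinuousOn S {x : Fin N → ℝ | ∀ i, 0 ≤ x i})
    (hS_mono : ∀ x y : Fin N → ℝ, (∀ i, 0 ≤ x i) → (∀ i, 0 ≤ y i) → x ≤ y → S x ≤ S y)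
    (hS_hom : ∀ t : ℝ, 0 < t → ∀ x : Fin N → ℝ, (∀ i, 0 ≤ x i) → S (t • x) = t • S x)
    (ε : ℝ) (hε : 0 < ε)
    (Tε : (Fin N → ℝ) → (Fin N → ℝ))
    (hTε : ∀ x, Tε x = S x + ε • (1 : Fin N → ℝ))
    (nrm : (Fin N → ℝ) → ℝ)
    (hnrm_zero : ∀ x, nrm x = 0 ↔ x = 0)
    (hnrm_smul : ∀ (a : ℝ) (x : Fin N → ℝ), nrm (a • x) = |a| * nrm x)
    (hnrm_add : ∀ x y : Fin N → ℝ, nrm (x + y) ≤ nrm x + nrm y)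
    (hnrm_mono : ∀ x y : Fin N → ℝ, (0 : Fin N → ℝ) ≤ x → x ≤ y → nrm x ≤ nrm y)
    (p : ℝ) (hp : 0 < p)
    (xp : Fin N → ℝ) (hxp_pos : ∀ i, 0 < xp i)
    (hxp_eig : Tε xp = (nrm (Tε xp) / p) • xp)
    (hxp_nrm : nrm xp = p) :
    (∀ lam : ℝ, 0 ≤ lam →
        (∃ u : Fin N → ℝ, (∀ i, 0 ≤ u i) ∧ u ≠ 0 ∧ S u = lam • u) →
        lam ≤ nrm (Tε xp) / p) ∧
    sSup {lam : ℝ | 0 ≤ lam ∧ ∃ u : Fin N → ℝ, (∀ i, 0 ≤ u i) ∧ u ≠ 0 ∧ S u = lam • u}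
      ≤ nrm (Tε xp) / p := by
  set μ := nrm (Tε xp) / p with hμdef
  have hi0 : (0 : ℕ) < N := hN
  have hTeq : ∀ i, S xp i + ε = μ * xp i := by
    intro i
    have := congrFun hxp_eig i
    rw [hTε] at this
    simpa using this
  have hμpos : 0 < μ := by
    have h := hTeq ⟨0, hi0⟩
    have h1 : 0 < μ * xp ⟨0, hi0⟩ := by
      rw [← h]
      have := hS_nonneg xp (fun i => (hxp_pos i).le) ⟨0, hi0⟩
      linarith
    nlinarith [hxp_pos (⟨0, hi0⟩ : Fin N)]
  have key : ∀ lam : ℝ, 0 ≤ lam →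
      (∃ u : Fin N → ℝ, (∀ i, 0 ≤ u i) ∧ u ≠ 0 ∧ S u = lam • u) → lam ≤ μ := by
    intro lam hlam ⟨u, hu_nonneg, hu_ne, hu_eig⟩
    have hne : (Finset.univ : Finset (Fin N)).Nonempty :=
      ⟨⟨0, hi0⟩, Finset.mem_univ _⟩
    set t := Finset.sup' Finset.univ hne (fun i => u i / xp i) with ht
    obtain ⟨i0, _, hi0eq⟩ := Finset.exists_mem_eq_sup' hne (fun i => u i / xp i)
    have hle : ∀ j, u j ≤ t * xp j := by
      intro j
      have : u j / xp j ≤ t := Finset.le_sup' (fun i => u i / xp i) (Finset.mem_univ j)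
      calc u j = (u j / xp j) * xp j := (div_mul_cancel₀ _ (hxp_pos j).ne').symm
        _ ≤ t * xp j := by
            exact mul_le_mul_of_nonneg_right this (hxp_pos j).le
    have htpos : 0 < t := by
      obtain ⟨j, hj⟩ : ∃ j, u j ≠ 0 := Function.ne_iff.mp hu_ne
      have hju : 0 < u j := lt_of_le_of_ne (hu_nonneg j) (Ne.symm hj)
      have : u j / xp j ≤ t := Finset.le_sup' (fun i => u i / xp i) (Finset.mem_univ j)
      have := div_pos hju (hxp_pos j)
      linarith
    have hui0 : u i0 = t * xp i0 := by
      have : t = u i0 / xp i0 := hi0eq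
      rw [this]
      exact (div_mul_cancel₀ _ (hxp_pos i0).ne').symm
    have hmon : S u ≤ S (t • xp) :=
      hS_mono u (t • xp) hu_nonneg
        (fun i => by
          have := hxp_pos i
          simpa using (mul_nonneg htpos.le this.le))
        (fun j => hle j)
    have hhom : S (t • xp) = t • S xp := hS_hom t htpos xp (fun i => (hxp_pos i).le)
    have hchain : lam * u i0 ≤ t * S xp i0 := by
      have h1 := hmon i0
      rw [hhom] at h1
      have h2 : S u i0 = lam * u i0 := by
        have := congrFun hu_eig i0
        simpa using this
      simpa [h2] using h1
    have hS : S xp i0 = μ * xp i0 - ε := by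
      have := hTeq i0; linarith
    have hfin : lam * u i0 ≤ μ * u i0 - t * ε := by
      rw [hS] at hchain
      calc lam * u i0 ≤ t * (μ * xp i0 - ε) := hchain
        _ = μ * (t * xp i0) - t * ε := by ring
        _ = μ * u i0 - t * ε := by rw [hui0]
    have hupos : 0 < u i0 := by
      rw [hui0]; exact mul_pos htpos (hxp_pos i0)
    nlinarith
  refine ⟨key, ?_⟩
  apply Real.sSup_le
  · rintro x ⟨hx0, hx⟩
    exact key x hx0 hx
  · exact hμpos.le
end

section
/- Let S : ℝ₊^N → ℝ₊^N be continuous, monotone, and positively homogeneous (S(tx) = tS(x) for all t > 0), let ε > 0, set T_ε(x) = S(x) + ε·1, and let ‖·‖ be a monotone norm on ℝ^N. Suppose that for each p > 0 there is a point x_p ∈ ℝ₊₊^N with T_ε(x_p) = (‖T_ε(x_p)‖/p)·x_p and ‖x_p‖ = p. Then lim_{p→∞} ‖T_ε(x_p)‖/p = ρ(S), the spectral radius of S. -/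
/-!
Write `μ p = nrm (T_ε x_p) / p`, so that `S x_p + ε 1 = μ p • x_p`. Comparing `x_q` with the
least multiple `t • x_p` above it (`t ≥ 1` when `p ≤ q`, by monotonicity of the norm) shows that
`μ` is antitone; the same comparison with a nonnegative eigenvector `S u = λ u` gives
`λ ≤ μ p` (Collatz–Wielandt). Hence `μ p` decreases to a limit `L` bounding every eigenvalue.
The normalised vectors `y_p = x_p / p` stay in a compact part of the cone away from `0` and
satisfy `S y_p = μ p • y_p - (ε / p) • 1`, so a limit point is an eigenvector for `L`, and
`L = ρ(S)`.
-/

open Filter Topology Set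

variable {ι : Type*}

lemma exists_le_ratio_smul [Finite ι] [Nonempty ι] (u : ι → ℝ) {v : ι → ℝ}
    (hv : ∀ i, 0 < v i) : ∃ i, u ≤ (u i / v i) • v := by
  obtain ⟨i, hi⟩ := Finite.exists_max fun j => u j / v j
  exact ⟨i, fun j => (div_le_iff₀ (hv j)).1 (hi j)⟩

lemma exists_tendsto_atTop_of_antitoneOn_Ioi {f : ℝ → ℝ} {a : ℝ} (hf : AntitoneOn f (Ioi a))
    (hbdd : BddBelow (f '' Ioi a)) : ∃ L, Tendsto f atTop (𝓝 L) := by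
  have hanti : Antitone fun x : Ioi a => f x := fun x y hxy => hf x.2 y.2 hxy
  have hbdd' : BddBelow (range fun x : Ioi a => f x) := by rwa [← image_eq_range]
  exact ⟨_, tendsto_comp_val_Ioi_atTop.1 (tendsto_atTop_ciInf hanti hbdd')⟩

section MonotoneHomogeneous

variable {S : (ι → ℝ) → ι → ℝ}

lemma apply_le_smul_apply_of_le_smul
    (hS_mono : ∀ x y : ι → ℝ, 0 ≤ x → 0 ≤ y → x ≤ y → S x ≤ S y)
    (hS_hom : ∀ t : ℝ, 0 < t → ∀ x : ι → ℝ, 0 ≤ x → S (t • x) = t • S x)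
    {t : ℝ} (ht : 0 < t) {u v : ι → ℝ} (hu : 0 ≤ u) (hv : 0 ≤ v) (huv : u ≤ t • v) :
    S u ≤ t • S v :=
  hS_hom t ht v hv ▸ hS_mono u (t • v) hu (smul_nonneg ht.le hv) huv

lemma eigenvalue_le_of_apply_le_smul [Finite ι] [Nonempty ι]
    (hS_mono : ∀ x y : ι → ℝ, 0 ≤ x → 0 ≤ y → x ≤ y → S x ≤ S y)
    (hS_hom : ∀ t : ℝ, 0 < t → ∀ x : ι → ℝ, 0 ≤ x → S (t • x) = t • S x)
    {v : ι → ℝ} (hv : ∀ i, 0 < v i) {μ : ℝ} (hSv : S v ≤ μ • v)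
    {u : ι → ℝ} (hu : 0 ≤ u) (hu0 : u ≠ 0) {lam : ℝ} (hSu : S u = lam • u) : lam ≤ μ := by
  obtain ⟨i, hi⟩ := exists_le_ratio_smul u hv
  set t := u i / v i
  have ht : 0 < t := by
    by_contra! ht
    exact hu0 (le_antisymm (hi.trans (smul_nonpos_of_nonpos_of_nonneg ht fun j => (hv j).le)) hu)
  have hui : u i = t * v i := (div_mul_cancel₀ _ (hv i).ne').symm
  have key : lam * u i ≤ μ * u i :=
    calc lam * u i = S u i := by rw [hSu]; rfl
      _ ≤ t * S v i := apply_le_smul_apply_of_le_smul hS_mono hS_hom ht hu (fun j => (hv j).le) hi i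
      _ ≤ t * (μ * v i) := mul_le_mul_of_nonneg_left (hSv i) ht.le
      _ = μ * u i := by rw [hui]; ring
  exact le_of_mul_le_mul_right key (hui ▸ mul_pos ht (hv i))

lemma le_of_apply_add_smul_one_eq [Finite ι] [Nonempty ι]
    (hS_mono : ∀ x y : ι → ℝ, 0 ≤ x → 0 ≤ y → x ≤ y → S x ≤ S y)
    (hS_hom : ∀ t : ℝ, 0 < t → ∀ x : ι → ℝ, 0 ≤ x → S (t • x) = t • S x)
    {ε : ℝ} (hε : 0 ≤ ε) {v w : ι → ℝ} (hv : ∀ i, 0 < v i) (hw : 0 ≤ w)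
    (hvw : ∃ i, v i ≤ w i) {μ ν : ℝ} (hSv : S v + ε • 1 = μ • v)
    (hSw : S w + ε • 1 = ν • w) : ν ≤ μ := by
  obtain ⟨i, hi⟩ := exists_le_ratio_smul w hv
  set t := w i / v i
  have ht : 1 ≤ t := by
    obtain ⟨j, hj⟩ := hvw
    exact le_of_mul_le_mul_right (by simpa using hj.trans (hi j)) (hv j)
  have hwi : w i = t * v i := (div_mul_cancel₀ _ (hv i).ne').symm
  have hSvi : S v i + ε = μ * v i := by simpa using congrFun hSv i
  have hSwi : S w i + ε = ν * w i := by simpa using congrFun hSw i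
  have hSwv : S w i ≤ t * S v i := apply_le_smul_apply_of_le_smul hS_mono hS_hom
    (zero_lt_one.trans_le ht) hw (fun j => (hv j).le) hi i
  -- `S` scales by `t` but the constant `ε` does not, which gains `(t - 1) ε ≥ 0`.
  have key : ν * w i ≤ μ * w i := by
    rw [hwi] at hSwi ⊢
    nlinarith [mul_le_mul_of_nonneg_right ht hε]
  exact le_of_mul_le_mul_right key (hwi ▸ mul_pos (zero_lt_one.trans_le ht) (hv i))

lemma apply_eq_smul_of_tendsto {α : Type*} {l : Filter α} [l.NeBot]
    (hS_cont : ContinuousOn S {x | 0 ≤ x}) {y : α → ι → ℝ} {μ : α → ℝ} {x : ι → ℝ} {L : ℝ}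
    (hy0 : ∀ n, 0 ≤ y n) (hy : Tendsto y l (𝓝 x)) (hμ : Tendsto μ l (𝓝 L))
    (hres : Tendsto (fun n => S (y n) - μ n • y n) l (𝓝 0)) : S x = L • x := by
  have hx0 : 0 ≤ x := ge_of_tendsto' hy hy0
  have hSy : Tendsto (fun n => S (y n)) l (𝓝 (S x)) :=
    (hS_cont x hx0).tendsto.comp (tendsto_nhdsWithin_iff.2 ⟨hy, Eventually.of_forall hy0⟩)
  refine tendsto_nhds_unique hSy ?_
  simpa using hres.add (hμ.smul hy)

section MonotoneNorm

variable {nrm : (ι → ℝ) → ℝ}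

lemma nrm_pos_of_nonneg_of_ne_zero (hnrm_zero : ∀ x, nrm x = 0 ↔ x = 0)
    (hnrm_mono : ∀ x y : ι → ℝ, 0 ≤ x → x ≤ y → nrm x ≤ nrm y)
    {y : ι → ℝ} (hy : 0 ≤ y) (hy0 : y ≠ 0) : 0 < nrm y :=
  lt_of_le_of_ne ((hnrm_zero 0).2 rfl ▸ hnrm_mono 0 y le_rfl hy)
    (fun h => hy0 ((hnrm_zero y).1 h.symm))

lemma mul_nrm_single_le_nrm
    (hnrm_smul : ∀ (a : ℝ) (x : ι → ℝ), nrm (a • x) = |a| * nrm x)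
    (hnrm_mono : ∀ x y : ι → ℝ, 0 ≤ x → x ≤ y → nrm x ≤ nrm y)
    [DecidableEq ι] {y : ι → ℝ} (hy : 0 ≤ y) (i : ι) :
    y i * nrm (Pi.single i 1) ≤ nrm y := by
  have hle : y i • (Pi.single i 1 : ι → ℝ) ≤ y := by
    intro j
    by_cases hj : j = i
    · subst hj; simp
    · simpa [hj] using hy j
  have h0 : 0 ≤ y i • (Pi.single i 1 : ι → ℝ) :=
    smul_nonneg (hy i) (Pi.single_nonneg.2 zero_le_one)
  simpa [hnrm_smul, abs_of_nonneg (hy i)] using hnrm_mono _ _ h0 hle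

variable [Fintype ι]

lemma nrm_le_norm_mul_nrm_one
    (hnrm_smul : ∀ (a : ℝ) (x : ι → ℝ), nrm (a • x) = |a| * nrm x)
    (hnrm_mono : ∀ x y : ι → ℝ, 0 ≤ x → x ≤ y → nrm x ≤ nrm y)
    {y : ι → ℝ} (hy : 0 ≤ y) : nrm y ≤ ‖y‖ * nrm 1 := by
  have hle : y ≤ ‖y‖ • 1 := fun j => by
    simpa [Real.norm_eq_abs] using (le_abs_self (y j)).trans (norm_le_pi_norm y j)
  simpa [hnrm_smul] using hnrm_mono _ _ hy hle

/-- By monotonicity, unit vectors `y ≥ 0` satisfy `y i ≤ nrm (Pi.single i 1)⁻¹` and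
`(nrm 1)⁻¹ ≤ ‖y‖`; these bounds cut out a compact set avoiding `0`. -/
lemma exists_isCompact_nonneg_nrm_eq_one [Nonempty ι] (hnrm_zero : ∀ x, nrm x = 0 ↔ x = 0)
    (hnrm_smul : ∀ (a : ℝ) (x : ι → ℝ), nrm (a • x) = |a| * nrm x)
    (hnrm_mono : ∀ x y : ι → ℝ, 0 ≤ x → x ≤ y → nrm x ≤ nrm y) :
    ∃ K : Set (ι → ℝ), IsCompact K ∧ (∀ x ∈ K, 0 ≤ x ∧ x ≠ 0) ∧
      ∀ x, 0 ≤ x → nrm x = 1 → x ∈ K := by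
  classical
  have hpos : ∀ y : ι → ℝ, 0 ≤ y → y ≠ 0 → 0 < nrm y :=
    fun y => nrm_pos_of_nonneg_of_ne_zero hnrm_zero hnrm_mono
  have h1 : 0 < nrm 1 := hpos 1 zero_le_one one_ne_zero
  have he : ∀ i : ι, 0 < nrm (Pi.single i 1) := fun i =>
    hpos _ (Pi.single_nonneg.2 zero_le_one) (by simp)
  refine ⟨Icc 0 (fun i => (nrm (Pi.single i 1))⁻¹) ∩ {x | (nrm 1)⁻¹ ≤ ‖x‖},
    isCompact_Icc.inter_right (isClosed_le continuous_const continuous_norm), ?_, ?_⟩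
  · rintro x ⟨⟨hx0, -⟩, hx⟩
    refine ⟨hx0, fun hx' => ?_⟩
    simp only [hx', mem_ofPred_eq, norm_zero, inv_nonpos] at hx
    exact hx.not_gt h1
  · intro x hx0 hx1
    refine ⟨⟨hx0, fun i => ?_⟩, ?_⟩
    · change x i ≤ (nrm (Pi.single i 1))⁻¹
      rw [← one_div, le_div_iff₀ (he i)]
      exact (mul_nrm_single_le_nrm hnrm_smul hnrm_mono hx0 i).trans hx1.le
    · rw [mem_ofPred_eq, ← one_div, div_le_iff₀ h1]
      exact hx1.symm.trans_le (nrm_le_norm_mul_nrm_one hnrm_smul hnrm_mono hx0)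

end MonotoneNorm

section ConditionalEigenvectors

variable {S : (ι → ℝ) → ι → ℝ} {nrm : (ι → ℝ) → ℝ} {ε : ℝ} {X : ℝ → ι → ℝ} {μ : ℝ → ℝ}

lemma antitoneOn_conditionalEigenvalue [Finite ι] [Nonempty ι]
    (hS_mono : ∀ x y : ι → ℝ, 0 ≤ x → 0 ≤ y → x ≤ y → S x ≤ S y)
    (hS_hom : ∀ t : ℝ, 0 < t → ∀ x : ι → ℝ, 0 ≤ x → S (t • x) = t • S x)
    (hnrm_mono : ∀ x y : ι → ℝ, 0 ≤ x → x ≤ y → nrm x ≤ nrm y) (hε : 0 ≤ ε)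
    (hX_pos : ∀ p, 0 < p → ∀ i, 0 < X p i) (hX_nrm : ∀ p, 0 < p → nrm (X p) = p)
    (heig : ∀ p, 0 < p → S (X p) + ε • 1 = μ p • X p) : AntitoneOn μ (Ioi 0) := by
  intro p hp q hq hpq
  by_cases h : ∃ i, X p i ≤ X q i
  · exact le_of_apply_add_smul_one_eq hS_mono hS_hom hε (hX_pos p hp)
      (fun i => (hX_pos q hq i).le) h (heig p hp) (heig q hq)
  · push Not at h
    have hqp : q ≤ p :=
      calc q = nrm (X q) := (hX_nrm q hq).symm
        _ ≤ nrm (X p) := hnrm_mono _ _ (fun i => (hX_pos q hq i).le) fun i => (h i).le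
        _ = p := hX_nrm p hp
    rw [le_antisymm hpq hqp]

lemma exists_eigenvector_of_tendsto_conditionalEigenvalue [Fintype ι] [Nonempty ι]
    (hS_cont : ContinuousOn S {x | 0 ≤ x})
    (hS_hom : ∀ t : ℝ, 0 < t → ∀ x : ι → ℝ, 0 ≤ x → S (t • x) = t • S x)
    (hnrm_zero : ∀ x, nrm x = 0 ↔ x = 0)
    (hnrm_smul : ∀ (a : ℝ) (x : ι → ℝ), nrm (a • x) = |a| * nrm x)
    (hnrm_mono : ∀ x y : ι → ℝ, 0 ≤ x → x ≤ y → nrm x ≤ nrm y)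
    (hX_nonneg : ∀ p, 0 < p → 0 ≤ X p) (hX_nrm : ∀ p, 0 < p → nrm (X p) = p)
    (heig : ∀ p, 0 < p → S (X p) + ε • 1 = μ p • X p) {L : ℝ} (hμ : Tendsto μ atTop (𝓝 L)) :
    ∃ x, 0 ≤ x ∧ x ≠ 0 ∧ S x = L • x := by
  obtain ⟨K, hK, hK_mem, hK_unit⟩ :=
    exists_isCompact_nonneg_nrm_eq_one hnrm_zero hnrm_smul hnrm_mono
  set y : ℝ → ι → ℝ := fun p => p⁻¹ • X p
  have hyK : ∀ p, 0 < p → y p ∈ K := fun p hp =>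
    hK_unit _ (smul_nonneg (inv_nonneg.2 hp.le) (hX_nonneg p hp))
      (by simp [y, hnrm_smul, hX_nrm p hp, abs_of_pos hp, hp.ne'])
  have hres : ∀ p, 0 < p → S (y p) - μ p • y p = -(p⁻¹ * ε) • (1 : ι → ℝ) := by
    intro p hp
    rw [hS_hom _ (inv_pos.2 hp) _ (hX_nonneg p hp), eq_sub_of_add_eq (heig p hp)]
    ext i
    simp only [y, Pi.sub_apply, Pi.smul_apply, smul_eq_mul, Pi.one_apply]
    ring
  have hres_lim : Tendsto (fun p => S (y p) - μ p • y p) atTop (𝓝 0) := by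
    have h : Tendsto (fun p : ℝ => -(p⁻¹ * ε) • (1 : ι → ℝ)) atTop (𝓝 0) := by
      simpa using (tendsto_inv_atTop_zero.mul_const ε).neg.smul_const (1 : ι → ℝ)
    exact h.congr' ((eventually_gt_atTop 0).mono fun p hp => (hres p hp).symm)
  obtain ⟨x, hxK, φ, hφ, hyx⟩ := hK.tendsto_subseq fun n => hyK (n + 1) n.cast_add_one_pos
  have hpφ : Tendsto (fun n => (φ n : ℝ) + 1) atTop atTop :=
    (tendsto_atTop_add_const_right _ 1 tendsto_natCast_atTop_atTop).comp hφ.tendsto_atTop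
  exact ⟨x, (hK_mem x hxK).1, (hK_mem x hxK).2,
    apply_eq_smul_of_tendsto hS_cont (fun n => (hK_mem _ (hyK _ (φ n).cast_add_one_pos)).1)
      hyx (hμ.comp hpφ) (hres_lim.comp hpφ)⟩

end ConditionalEigenvectors

theorem stmt_4_general (N : ℕ) (hN : 1 ≤ N)
    (S : (Fin N → ℝ) → (Fin N → ℝ))
    (hS_nonneg : ∀ x : Fin N → ℝ, (∀ i, 0 ≤ x i) → ∀ i, 0 ≤ S x i)
    (hS_cont : ContinuousOn S {x : Fin N → ℝ | ∀ i, 0 ≤ x i})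
    (hS_mono : ∀ x y : Fin N → ℝ, (∀ i, 0 ≤ x i) → (∀ i, 0 ≤ y i) → x ≤ y → S x ≤ S y)
    (hS_hom : ∀ t : ℝ, 0 < t → ∀ x : Fin N → ℝ, (∀ i, 0 ≤ x i) → S (t • x) = t • S x)
    (ε : ℝ) (hε : 0 < ε)
    (Tε : (Fin N → ℝ) → (Fin N → ℝ))
    (hTε : ∀ x, Tε x = S x + ε • (1 : Fin N → ℝ))
    (nrm : (Fin N → ℝ) → ℝ)
    (hnrm_zero : ∀ x, nrm x = 0 ↔ x = 0)
    (hnrm_smul : ∀ (a : ℝ) (x : Fin N → ℝ), nrm (a • x) = |a| * nrm x)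
    (hnrm_mono : ∀ x y : Fin N → ℝ, (0 : Fin N → ℝ) ≤ x → x ≤ y → nrm x ≤ nrm y)
    (X : ℝ → (Fin N → ℝ))
    (hX : ∀ p : ℝ, 0 < p →
      (∀ i, 0 < X p i) ∧ Tε (X p) = (nrm (Tε (X p)) / p) • X p ∧ nrm (X p) = p) :
    Tendsto (fun p : ℝ => nrm (Tε (X p)) / p) atTop
      (𝓝 (sSup {lam : ℝ | 0 ≤ lam ∧
        ∃ u : Fin N → ℝ, (∀ i, 0 ≤ u i) ∧ u ≠ 0 ∧ S u = lam • u})) := by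
  have : Nonempty (Fin N) := ⟨⟨0, hN⟩⟩
  set μ : ℝ → ℝ := fun p => nrm (Tε (X p)) / p
  have heig : ∀ p, 0 < p → S (X p) + ε • 1 = μ p • X p :=
    fun p hp => (hTε _).symm.trans (hX p hp).2.1
  have hμ_nonneg : ∀ p, 0 < p → 0 ≤ μ p := by
    intro p hp
    obtain ⟨i⟩ := ‹Nonempty (Fin N)›
    have h : S (X p) i + ε = μ p * X p i := by simpa using congrFun (heig p hp) i
    have hSi := hS_nonneg (X p) (fun j => ((hX p hp).1 j).le) i
    exact nonneg_of_mul_nonneg_left (by linarith) ((hX p hp).1 i)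
  obtain ⟨L, hL⟩ := exists_tendsto_atTop_of_antitoneOn_Ioi
    (antitoneOn_conditionalEigenvalue hS_mono hS_hom hnrm_mono hε.le (fun p hp => (hX p hp).1)
      (fun p hp => (hX p hp).2.2) heig)
    ⟨0, by rintro _ ⟨p, hp, rfl⟩; exact hμ_nonneg p hp⟩
  obtain ⟨x, hx0, hx_ne, hSx⟩ := exists_eigenvector_of_tendsto_conditionalEigenvalue hS_cont
    hS_hom hnrm_zero hnrm_smul hnrm_mono (fun p hp i => ((hX p hp).1 i).le)
    (fun p hp => (hX p hp).2.2) heig hL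
  have hL_greatest : IsGreatest {lam : ℝ | 0 ≤ lam ∧
      ∃ u : Fin N → ℝ, (∀ i, 0 ≤ u i) ∧ u ≠ 0 ∧ S u = lam • u} L := by
    refine ⟨⟨ge_of_tendsto hL ((eventually_gt_atTop 0).mono hμ_nonneg), x, hx0, hx_ne, hSx⟩, ?_⟩
    rintro lam ⟨-, u, hu, hu0, hSu⟩
    refine ge_of_tendsto hL ((eventually_gt_atTop 0).mono fun p hp => ?_)
    exact eigenvalue_le_of_apply_le_smul hS_mono hS_hom (hX p hp).1
      ((le_add_of_nonneg_right (smul_nonneg hε.le zero_le_one)).trans_eq (heig p hp)) hu hu0 hSu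
  rw [hL_greatest.csSup_eq]
  exact hL

/-- For `T_ε(x) = S(x) + ε·1` and, for each `p > 0`, a normalized conditional
eigenvector `X p ∈ ℝ₊₊^N` with `T_ε(X p) = (‖T_ε(X p)‖/p)·(X p)` and `‖X p‖ = p`,
we have `lim_{p→∞} ‖T_ε(X p)‖/p = ρ(S)`, the spectral radius of `S`. -/
theorem stmt_4 (N : ℕ) (hN : 1 ≤ N)
    (S : (Fin N → ℝ) → (Fin N → ℝ))
    (hS_nonneg : ∀ x : Fin N → ℝ, (∀ i, 0 ≤ x i) → ∀ i, 0 ≤ S x i)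
    (hS_cont : ContinuousOn S {x : Fin N → ℝ | ∀ i, 0 ≤ x i})
    (hS_mono : ∀ x y : Fin N → ℝ, (∀ i, 0 ≤ x i) → (∀ i, 0 ≤ y i) → x ≤ y → S x ≤ S y)
    (hS_hom : ∀ t : ℝ, 0 < t → ∀ x : Fin N → ℝ, (∀ i, 0 ≤ x i) → S (t • x) = t • S x)
    (ε : ℝ) (hε : 0 < ε)
    (Tε : (Fin N → ℝ) → (Fin N → ℝ))
    (hTε : ∀ x, Tε x = S x + ε • (1 : Fin N → ℝ))
    (nrm : (Fin N → ℝ) → ℝ)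
    (hnrm_zero : ∀ x, nrm x = 0 ↔ x = 0)
    (hnrm_smul : ∀ (a : ℝ) (x : Fin N → ℝ), nrm (a • x) = |a| * nrm x)
    (hnrm_add : ∀ x y : Fin N → ℝ, nrm (x + y) ≤ nrm x + nrm y)
    (hnrm_mono : ∀ x y : Fin N → ℝ, (0 : Fin N → ℝ) ≤ x → x ≤ y → nrm x ≤ nrm y)
    (X : ℝ → (Fin N → ℝ))
    (hX : ∀ p : ℝ, 0 < p →
      (∀ i, 0 < X p i) ∧ Tε (X p) = (nrm (Tε (X p)) / p) • X p ∧ nrm (X p) = p) :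
    Tendsto (fun p : ℝ => nrm (Tε (X p)) / p) atTop
      (𝓝 (sSup {lam : ℝ | 0 ≤ lam ∧
        ∃ u : Fin N → ℝ, (∀ i, 0 ≤ u i) ∧ u ≠ 0 ∧ S u = lam • u})) :=
  stmt_4_general N hN S hS_nonneg hS_cont hS_mono hS_hom ε hε Tε hTε nrm hnrm_zero hnrm_smul
    hnrm_mono X hX
end MonotoneHomogeneous
end

section
/- Let T : ℝ₊^N → ℝ₊₊^N be a continuous, convex (each coordinate function convex), and monotone mapping, and define its asymptotic mapping S coordinatewise by S_i(d) = sup{T_i(x+d) − T_i(x) : x ∈ ℝ₊^N} ∈ [0,∞] for d ∈ ℝ₊^N. Suppose there exist v ∈ ℝ₊₊^N and ρ ∈ [0,1) with S_i(v) = ρ·v_i for every coordinate i. Then for every c ∈ [ρ, 1), T is c-contractive with contraction vector v: for all x ∈ ℝ₊^N and all ε > 0, T(x + εv) ≤ T(x) + cεv. -/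
open Filter Topology

/-- If `T : ℝ₊^N → ℝ₊₊^N` is continuous, convex, and monotone, its asymptotic mapping
(defined coordinatewise by `S_i(d) = sup{T_i(x+d) − T_i(x) : x ∈ ℝ₊^N} ∈ [0,∞]`) has a
strictly positive eigenvector `v` with eigenvalue `ρ ∈ [0,1)`, then `T` is `c`-contractive
with contraction vector `v` for every `c ∈ [ρ,1)`. -/
theorem stmt_6 (N : ℕ) (hN : 1 ≤ N)
    (T : (Fin N → ℝ) → (Fin N → ℝ))
    (hT_pos : ∀ x : Fin N → ℝ, (∀ i, 0 ≤ x i) → ∀ i, 0 < T x i)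
    (hT_cont : ContinuousOn T {x : Fin N → ℝ | ∀ i, 0 ≤ x i})
    (hT_conv : ∀ i : Fin N, ConvexOn ℝ {x : Fin N → ℝ | ∀ j, 0 ≤ x j} (fun x => T x i))
    (hT_mono : ∀ x y : Fin N → ℝ, (∀ i, 0 ≤ x i) → (∀ i, 0 ≤ y i) → x ≤ y → T x ≤ T y)
    (S : (Fin N → ℝ) → Fin N → EReal)
    (hS : ∀ d : Fin N → ℝ, (∀ i, 0 ≤ d i) → ∀ i : Fin N,
      S d i = sSup {z : EReal |
        ∃ x : Fin N → ℝ, (∀ j, 0 ≤ x j) ∧ z = ((T (x + d) i - T x i : ℝ) : EReal)})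
    (v : Fin N → ℝ) (hv : ∀ i, 0 < v i)
    (ρ : ℝ) (hρ0 : 0 ≤ ρ) (hρ1 : ρ < 1)
    (heig : ∀ i : Fin N, S v i = ((ρ * v i : ℝ) : EReal)) :
    ∀ c : ℝ, ρ ≤ c → c < 1 →
      ∀ x : Fin N → ℝ, (∀ i, 0 ≤ x i) → ∀ ε : ℝ, 0 < ε →
        ∀ i : Fin N, T (x + ε • v) i ≤ T x i + c * ε * v i := by
  intro c hρc hc1 x hx ε hε i
  have hvnn : ∀ j, 0 ≤ v j := fun j => (hv j).le
  -- Key bound from the eigenvector equation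
  have key : ∀ y : Fin N → ℝ, (∀ j, 0 ≤ y j) → T (y + v) i - T y i ≤ ρ * v i := by
    intro y hy
    have hmem : ((T (y + v) i - T y i : ℝ) : EReal) ∈
        {z : EReal | ∃ x : Fin N → ℝ, (∀ j, 0 ≤ x j) ∧
          z = ((T (x + v) i - T x i : ℝ) : EReal)} := ⟨y, hy, rfl⟩
    have h1 := le_sSup hmem
    rw [← hS v hvnn i, heig i] at h1
    exact_mod_cast h1
  -- The bound for small increments, via convexity
  have base : ∀ t : ℝ, 0 < t → t ≤ 1 → ∀ y : Fin N → ℝ, (∀ j, 0 ≤ y j) →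
      T (y + t • v) i ≤ T y i + ρ * t * v i := by
    intro t ht0 ht1 y hy
    have hy' : y ∈ {x : Fin N → ℝ | ∀ j, 0 ≤ x j} := hy
    have hyv : y + v ∈ {x : Fin N → ℝ | ∀ j, 0 ≤ x j} := by
      intro j; have := hvnn j; have := hy j; simp [Pi.add_apply]; linarith
    have hconv := (hT_conv i).2 hy' hyv (by linarith : (0:ℝ) ≤ 1 - t)
      (le_of_lt ht0) (by ring)
    have heq : (1 - t) • y + t • (y + v) = y + t • v := by
      funext j; simp [Pi.add_apply, Pi.smul_apply, smul_eq_mul]; ring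
    rw [heq] at hconv
    simp only [smul_eq_mul] at hconv
    have hk := key y hy
    nlinarith [hk]
  -- The bound for all increments, by induction
  have main : ∀ n : ℕ, ∀ t : ℝ, 0 < t → t ≤ n → ∀ y : Fin N → ℝ, (∀ j, 0 ≤ y j) →
      T (y + t • v) i ≤ T y i + ρ * t * v i := by
    intro n
    induction n with
    | zero => intro t ht0 htn; exact absurd (ht0.trans_le htn) (by norm_num)
    | succ m ih =>
      intro t ht0 htn y hy
      by_cases ht1 : t ≤ 1
      · exact base t ht0 ht1 y hy
      · push_neg at ht1
        have hm : (1:ℝ) ≤ m := by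
          rcases Nat.eq_zero_or_pos m with h0 | h0
          · subst h0; push_cast at htn; linarith
          · exact_mod_cast h0
        have ht0' : 0 < t - 1 := by linarith
        have htn' : t - 1 ≤ m := by push_cast at htn ⊢; linarith
        have hyn : ∀ j, 0 ≤ (y + (t - 1) • v) j := by
          intro j
          have := hvnn j; have := hy j
          simp only [Pi.add_apply, Pi.smul_apply, smul_eq_mul]
          nlinarith
        have h1 := ih (t - 1) ht0' htn' y hy
        have h2 := key (y + (t - 1) • v) hyn
        have heq : (y + (t - 1) • v) + v = y + t • v := by
          funext j; simp [Pi.add_apply, Pi.smul_apply, smul_eq_mul]; ring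
        rw [heq] at h2
        have hvi := (hv i).le
        nlinarith [h1, h2]
  have hceil : ε ≤ (⌈ε⌉₊ : ℝ) := Nat.le_ceil ε
  have h := main ⌈ε⌉₊ ε hε hceil x hx
  have hvi := (hv i).le
  nlinarith [mul_nonneg (mul_nonneg (sub_nonneg.mpr hρc) hε.le) hvi]
end

section
/- Let T : ℝ₊^N → ℝ₊₊^N be continuous, convex (each coordinate function convex), monotone, and c-contractive with witnesses (v, c) ∈ ℝ₊₊^N × [0,1), and define S : ℝ₊^N → ℝ₊^N coordinatewise by S_i(d) = sup{T_i(x+d) − T_i(x) : x ∈ ℝ₊^N} (finite by the contraction property). Then every λ ≥ 0 for which there exists u ∈ ℝ₊^N \ {0} with S(u) = λu satisfies λ ≤ c; in particular the spectral radius ρ(S) satisfies ρ(S) ≤ c < 1. -/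
open Filter Topology

/-- If `T : ℝ₊^N → ℝ₊₊^N` is continuous, convex, monotone and `c`-contractive with
witnesses `(v, c) ∈ ℝ₊₊^N × [0,1)`, and `S` is its asymptotic mapping defined
coordinatewise by `S_i(d) = sup{T_i(x+d) − T_i(x) : x ∈ ℝ₊^N}`, then every nonlinear
eigenvalue `λ ≥ 0` of `S` satisfies `λ ≤ c`; in particular `ρ(S) ≤ c < 1`. -/
theorem stmt_8 (N : ℕ) (hN : 1 ≤ N)
    (T : (Fin N → ℝ) → (Fin N → ℝ))
    (hT_pos : ∀ x : Fin N → ℝ, (∀ i, 0 ≤ x i) → ∀ i, 0 < T x i)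
    (hT_cont : ContinuousOn T {x : Fin N → ℝ | ∀ i, 0 ≤ x i})
    (hT_conv : ∀ i : Fin N, ConvexOn ℝ {x : Fin N → ℝ | ∀ j, 0 ≤ x j} (fun x => T x i))
    (hT_mono : ∀ x y : Fin N → ℝ, (∀ i, 0 ≤ x i) → (∀ i, 0 ≤ y i) → x ≤ y → T x ≤ T y)
    (v : Fin N → ℝ) (hv : ∀ i, 0 < v i)
    (c : ℝ) (hc0 : 0 ≤ c) (hc1 : c < 1)
    (hcontr : ∀ x : Fin N → ℝ, (∀ i, 0 ≤ x i) → ∀ ε : ℝ, 0 < ε →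
      ∀ i : Fin N, T (x + ε • v) i ≤ T x i + c * ε * v i)
    (S : (Fin N → ℝ) → (Fin N → ℝ))
    (hS : ∀ d : Fin N → ℝ, (∀ i, 0 ≤ d i) → ∀ i : Fin N,
      S d i = sSup {r : ℝ | ∃ x : Fin N → ℝ, (∀ j, 0 ≤ x j) ∧ r = T (x + d) i - T x i}) :
    (∀ lam : ℝ, 0 ≤ lam →
      (∃ u : Fin N → ℝ, (∀ i, 0 ≤ u i) ∧ u ≠ 0 ∧ S u = lam • u) → lam ≤ c) ∧
    sSup {lam : ℝ | 0 ≤ lam ∧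
        ∃ u : Fin N → ℝ, (∀ i, 0 ≤ u i) ∧ u ≠ 0 ∧ S u = lam • u} ≤ c ∧
    c < 1 := by
  have key : ∀ lam : ℝ, 0 ≤ lam →
      (∃ u : Fin N → ℝ, (∀ i, 0 ≤ u i) ∧ u ≠ 0 ∧ S u = lam • u) → lam ≤ c := by
    intro lam hlam ⟨u, hu, hune, heig⟩
    have hne : (Finset.univ : Finset (Fin N)).Nonempty := ⟨⟨0, hN⟩, Finset.mem_univ _⟩
    obtain ⟨i0, -, hmax⟩ := Finset.exists_max_image Finset.univ (fun i => u i / v i) hne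
    set M : ℝ := u i0 / v i0 with hM
    have hMpos : 0 < M := by
      obtain ⟨j, hj⟩ : ∃ j, u j ≠ 0 := by
        by_contra h
        push_neg at h
        exact hune (funext h)
      have hju : 0 < u j := lt_of_le_of_ne (hu j) (Ne.symm hj)
      exact lt_of_lt_of_le (div_pos hju (hv j)) (hmax j (Finset.mem_univ _))
    have huM : ∀ i, u i ≤ M * v i := fun i =>
      (div_le_iff₀ (hv i)).mp (hmax i (Finset.mem_univ _))
    have hui0 : u i0 = M * v i0 := by
      rw [hM, div_mul_cancel₀ _ (hv i0).ne']
    -- bound on S u i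
    have hbound : ∀ i, S u i ≤ c * M * v i := by
      intro i
      rw [hS u hu i]
      apply Real.sSup_le
      · rintro r ⟨x, hx, rfl⟩
        have hxu : ∀ j, 0 ≤ (x + u) j := fun j => add_nonneg (hx j) (hu j)
        have hxMv : ∀ j, 0 ≤ (x + M • v) j := fun j =>
          add_nonneg (hx j) (mul_nonneg hMpos.le (hv j).le)
        have h1 : T (x + u) i ≤ T (x + M • v) i := by
          apply hT_mono _ _ hxu hxMv
          intro j
          simp only [Pi.add_apply, Pi.smul_apply, smul_eq_mul]
          linarith [huM j]
        have h2 : T (x + M • v) i ≤ T x i + c * M * v i := hcontr x hx M hMpos i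
        linarith
      · exact mul_nonneg (mul_nonneg hc0 hMpos.le) (hv i).le
    have := hbound i0
    rw [heig] at this
    have h3 : lam * (M * v i0) ≤ c * (M * v i0) := by
      simp only [Pi.smul_apply, smul_eq_mul] at this
      rw [hui0] at this
      linarith
    exact le_of_mul_le_mul_right h3 (mul_pos hMpos (hv i0))
  refine ⟨key, ?_, hc1⟩
  apply Real.sSup_le
  · rintro lam ⟨hlam, hex⟩
    exact key lam hlam hex
  · exact hc0
end

section
/- Let T : ℝ₊^N → ℝ₊₊^N be continuous, convex (each coordinate function convex), monotone, and c-contractive with witnesses (v, c) ∈ ℝ₊₊^N × [0,1), and define S : ℝ₊^N → ℝ₊^N coordinatewise by S_i(d) = sup{T_i(x+d) − T_i(x) : x ∈ ℝ₊^N} (finite by the contraction property). Then S is continuous on ℝ₊^N. -/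
open Filter Topology

/-- If `T : ℝ₊^N → ℝ₊₊^N` is continuous, convex, monotone and `c`-contractive with
witnesses `(v, c) ∈ ℝ₊₊^N × [0,1)`, then its asymptotic mapping `S`, defined
coordinatewise by `S_i(d) = sup{T_i(x+d) − T_i(x) : x ∈ ℝ₊^N}`, is continuous on `ℝ₊^N`. -/
theorem stmt_9 (N : ℕ) (hN : 1 ≤ N)
    (T : (Fin N → ℝ) → (Fin N → ℝ))
    (hT_pos : ∀ x : Fin N → ℝ, (∀ i, 0 ≤ x i) → ∀ i, 0 < T x i)
    (hT_cont : ContinuousOn T {x : Fin N → ℝ | ∀ i, 0 ≤ x i})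
    (hT_conv : ∀ i : Fin N, ConvexOn ℝ {x : Fin N → ℝ | ∀ j, 0 ≤ x j} (fun x => T x i))
    (hT_mono : ∀ x y : Fin N → ℝ, (∀ i, 0 ≤ x i) → (∀ i, 0 ≤ y i) → x ≤ y → T x ≤ T y)
    (v : Fin N → ℝ) (hv : ∀ i, 0 < v i)
    (c : ℝ) (hc0 : 0 ≤ c) (hc1 : c < 1)
    (hcontr : ∀ x : Fin N → ℝ, (∀ i, 0 ≤ x i) → ∀ ε : ℝ, 0 < ε →
      ∀ i : Fin N, T (x + ε • v) i ≤ T x i + c * ε * v i)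
    (S : (Fin N → ℝ) → (Fin N → ℝ))
    (hS : ∀ d : Fin N → ℝ, (∀ i, 0 ≤ d i) → ∀ i : Fin N,
      S d i = sSup {r : ℝ | ∃ x : Fin N → ℝ, (∀ j, 0 ≤ x j) ∧ r = T (x + d) i - T x i}) :
    ContinuousOn S {d : Fin N → ℝ | ∀ i, 0 ≤ d i} := by
  have hNe : Nonempty (Fin N) := ⟨⟨0, hN⟩⟩
  -- key estimate from monotonicity + contraction
  have key : ∀ d : Fin N → ℝ, (∀ i, 0 ≤ d i) → ∀ x : Fin N → ℝ, (∀ i, 0 ≤ x i) →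
      ∀ ε : ℝ, 0 < ε → (∀ i, d i ≤ ε * v i) → ∀ i, T (x + d) i - T x i ≤ c * ε * v i := by
    intro d hd x hx ε hε hdε i
    have h1 : T (x + d) ≤ T (x + ε • v) := by
      apply hT_mono
      · intro j; exact add_nonneg (hx j) (hd j)
      · intro j
        have : 0 ≤ ε * v j := (mul_pos hε (hv j)).le
        simp only [Pi.add_apply, Pi.smul_apply, smul_eq_mul]
        linarith [hx j]
      · intro j
        simp only [Pi.add_apply, Pi.smul_apply, smul_eq_mul]
        linarith [hdε j]
    have h2 := hcontr x hx ε hε i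
    linarith [h1 i]
  -- nonemptiness of the sets
  have hne : ∀ d : Fin N → ℝ, (∀ i, 0 ≤ d i) → ∀ i : Fin N,
      Set.Nonempty {r : ℝ | ∃ x : Fin N → ℝ, (∀ j, 0 ≤ x j) ∧ r = T (x + d) i - T x i} :=
    fun d _ i => ⟨T (0 + d) i - T 0 i, 0, fun j => le_refl 0, rfl⟩
  -- boundedness above
  have hbdd : ∀ d : Fin N → ℝ, (∀ i, 0 ≤ d i) → ∀ i : Fin N,
      BddAbove {r : ℝ | ∃ x : Fin N → ℝ, (∀ j, 0 ≤ x j) ∧ r = T (x + d) i - T x i} := by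
    intro d hd i
    set ε₀ : ℝ := 1 + ∑ j, d j / v j with hε₀def
    have hsum : 0 ≤ ∑ j, d j / v j :=
      Finset.sum_nonneg fun j _ => div_nonneg (hd j) (hv j).le
    have hε₀ : 0 < ε₀ := by rw [hε₀def]; linarith
    have hdε : ∀ j, d j ≤ ε₀ * v j := by
      intro j
      have h1 : d j / v j ≤ ∑ k, d k / v k :=
        Finset.single_le_sum (f := fun k => d k / v k)
          (fun k _ => div_nonneg (hd k) (hv k).le) (Finset.mem_univ j)
      have h2 : d j / v j ≤ ε₀ := by rw [hε₀def]; linarith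
      exact (div_le_iff₀ (hv j)).mp h2
    refine ⟨c * ε₀ * v i, ?_⟩
    rintro r ⟨x, hx, rfl⟩
    exact key d hd x hx ε₀ hε₀ hdε i
  -- main comparison estimate
  have main : ∀ d e : Fin N → ℝ, (∀ i, 0 ≤ d i) → (∀ i, 0 ≤ e i) →
      ∀ ε : ℝ, 0 < ε → (∀ i, d i ≤ e i + ε * v i) →
      ∀ i, S d i ≤ S e i + c * ε * v i := by
    intro d e hd he ε hε hde i
    rw [hS d hd i, hS e he i]
    apply csSup_le (hne d hd i)
    rintro r ⟨x, hx, rfl⟩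
    have hxe : ∀ j, 0 ≤ (x + e) j := fun j => add_nonneg (hx j) (he j)
    have h1 : T (x + d) ≤ T ((x + e) + ε • v) := by
      apply hT_mono
      · intro j; exact add_nonneg (hx j) (hd j)
      · intro j
        have : 0 ≤ ε * v j := (mul_pos hε (hv j)).le
        simp only [Pi.add_apply, Pi.smul_apply, smul_eq_mul]
        linarith [hx j, he j]
      · intro j
        simp only [Pi.add_apply, Pi.smul_apply, smul_eq_mul]
        linarith [hde j]
    have h2 := hcontr (x + e) hxe ε hε i
    have h3 : T (x + e) i - T x i ≤
        sSup {r : ℝ | ∃ y : Fin N → ℝ, (∀ j, 0 ≤ y j) ∧ r = T (y + e) i - T y i} :=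
      le_csSup (hbdd e he i) ⟨x, hx, rfl⟩
    linarith [h1 i]
  -- continuity via ε-δ
  rw [Metric.continuousOn_iff]
  intro d hd ε' hε'
  have hune : (Finset.univ : Finset (Fin N)).Nonempty := Finset.univ_nonempty
  set vmax : ℝ := Finset.univ.sup' hune v with hvmaxdef
  set vmin : ℝ := Finset.univ.inf' hune v with hvmindef
  have hvmin : 0 < vmin := by
    rw [hvmindef, Finset.lt_inf'_iff]
    exact fun i _ => hv i
  have hvminle : ∀ i, vmin ≤ v i := fun i => Finset.inf'_le v (Finset.mem_univ i)
  have hvmaxle : ∀ i, v i ≤ vmax := fun i => Finset.le_sup' v (Finset.mem_univ i)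
  have hvmax : 0 < vmax := lt_of_lt_of_le hvmin (le_trans (hvminle (Classical.arbitrary _)) (hvmaxle _))
  have hA : 0 ≤ c * vmax := mul_nonneg hc0 hvmax.le
  set δ : ℝ := ε' * vmin / (2 * (c * vmax + 1)) with hδdef
  have hδ : 0 < δ := by
    rw [hδdef]
    positivity
  refine ⟨δ, hδ, ?_⟩
  intro e he hdist
  set ε : ℝ := δ / vmin with hεdef
  have hεpos : 0 < ε := div_pos hδ hvmin
  have hδε : ∀ i, δ ≤ ε * v i := by
    intro i
    have h1 : ε * vmin ≤ ε * v i := mul_le_mul_of_nonneg_left (hvminle i) hεpos.le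
    have h2 : ε * vmin = δ := by
      rw [hεdef]; field_simp
    linarith
  have hcoord : ∀ i, |e i - d i| < δ := by
    intro i
    have := dist_le_pi_dist e d i
    rw [Real.dist_eq] at this
    linarith [hdist]
  have hd_e : ∀ i, d i ≤ e i + ε * v i := by
    intro i
    have := abs_lt.mp (hcoord i)
    linarith [hδε i]
  have he_d : ∀ i, e i ≤ d i + ε * v i := by
    intro i
    have := abs_lt.mp (hcoord i)
    linarith [hδε i]
  have h1 := main d e hd he ε hεpos hd_e
  have h2 := main e d he hd ε hεpos he_d
  -- bound c * ε * v i ≤ ε' / 2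
  have hbound : ∀ i, c * ε * v i ≤ ε' / 2 := by
    intro i
    have hden : (2 * (c * vmax + 1)) ≠ 0 := by positivity
    have hεeq : ε = ε' / (2 * (c * vmax + 1)) := by
      rw [hεdef, hδdef]
      field_simp
    have htpos : 0 ≤ ε' / (2 * (c * vmax + 1)) := by positivity
    have ht : ε' / (2 * (c * vmax + 1)) * (2 * (c * vmax + 1)) = ε' :=
      div_mul_cancel₀ ε' hden
    have hvi : c * ε * v i ≤ c * ε * vmax := by
      have : 0 ≤ c * ε := mul_nonneg hc0 hεpos.le
      exact mul_le_mul_of_nonneg_left (hvmaxle i) this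
    rw [hεeq] at hvi
    nlinarith [hvi, htpos, ht]
  have hfinal : dist (S e) (S d) ≤ ε' / 2 := by
    rw [dist_pi_le_iff (by linarith : (0:ℝ) ≤ ε' / 2)]
    intro i
    rw [Real.dist_eq, abs_sub_le_iff]
    constructor
    · linarith [h2 i, hbound i]
    · linarith [h1 i, hbound i]
  linarith
end

section
/- Let T : ℝ₊^N → ℝ₊₊^N be a convex standard interference mapping (continuous, each coordinate function convex, monotone, and scalable). For each x ∈ ℝ₊^N the function t ↦ T(tx)/t is coordinatewise nonincreasing on (0,∞), so the asymptotic mapping S(x) := lim_{t→∞} T(tx)/t exists in ℝ₊^N. Then T is contractive (i.e., there exist v ∈ ℝ₊₊^N and c ∈ [0,1) with T(x+εv) ≤ T(x) + cεv for all x ∈ ℝ₊^N and ε > 0) if and only if ρ(S) < 1, where ρ(S) := sup{λ ≥ 0 : S(x) = λx for some x ∈ ℝ₊^N \ {0}}. -/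
/-!
The asymptotic map `S` of a convex monotone `T` is monotone, positively homogeneous and
subadditive on the orthant, and convexity gives the recession inequality `T (x + y) ≤ T x + S y`.
So `T` is contractive with respect to `v > 0` with constant `c` exactly when `S v ≤ c • v`, and
such a sub-eigenvector bounds every eigenvalue of `S` by `c` (Collatz–Wielandt).

Conversely, if no sub-eigenvector with `c < 1` exists, consider the perturbations `S + δ • 1`.
Maximising `r` over the compact set `{(x, r) | x ∈ Δ, r • x ≤ S x + δ • 1}` of the simplex `Δ`
gives an eigenvector of `S + δ • 1`: otherwise one application of `S + δ • 1` strictly improves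
the ratio. Its eigenvalue is `≥ 1`, as the eigenvector would otherwise be a sub-eigenvector, and
letting `δ → 0` by compactness yields an eigenvalue `≥ 1` of `S`, so `ρ(S) ≥ 1`.
-/
open Filter Topology Set

variable {ι : Type*}

structure IsMonotoneSublinear (S : (ι → ℝ) → ι → ℝ) : Prop where
  monotoneOn : MonotoneOn S (Ici 0)
  map_smul : ∀ ⦃s : ℝ⦄, 0 ≤ s → ∀ ⦃x : ι → ℝ⦄, 0 ≤ x → S (s • x) = s • S x
  map_add_le : ∀ ⦃x y : ι → ℝ⦄, 0 ≤ x → 0 ≤ y → S (x + y) ≤ S x + S y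

def HasAsymptoticMap (T S : (ι → ℝ) → ι → ℝ) : Prop :=
  ∀ x, 0 ≤ x → Tendsto (fun t : ℝ => t⁻¹ • T (t • x)) atTop (𝓝 (S x))

def IsContractiveWith (T : (ι → ℝ) → ι → ℝ) (v : ι → ℝ) (c : ℝ) : Prop :=
  ∀ x, 0 ≤ x → ∀ ε : ℝ, 0 < ε → T (x + ε • v) ≤ T x + (c * ε) • v

def coneEigenvalues (S : (ι → ℝ) → ι → ℝ) : Set ℝ :=
  {lam | 0 ≤ lam ∧ ∃ u : ι → ℝ, 0 ≤ u ∧ u ≠ 0 ∧ S u = lam • u}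

noncomputable def coneSpectralRadius (S : (ι → ℝ) → ι → ℝ) : ℝ :=
  sSup (coneEigenvalues S)

theorem antitoneOn_apply_smul_div {T : (ι → ℝ) → ι → ℝ}
    (hT : ∀ α : ℝ, 1 < α → ∀ x : ι → ℝ, 0 ≤ x → ∀ i, T (α • x) i ≤ α * T x i)
    {x : ι → ℝ} (hx : 0 ≤ x) (i : ι) :
    AntitoneOn (fun t : ℝ => T (t • x) i / t) (Ioi 0) := by
  intro s (hs : 0 < s) t (ht : 0 < t) hst
  rcases hst.eq_or_lt with rfl | hlt
  · rfl
  have hscal := hT (t / s) ((one_lt_div hs).2 hlt) (s • x) (smul_nonneg hs.le hx) i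
  rw [smul_smul, div_mul_cancel₀ _ hs.ne'] at hscal
  rw [div_le_div_iff₀ ht hs]
  calc T (t • x) i * s ≤ t / s * T (s • x) i * s := by gcongr
    _ = T (s • x) i * t := by field_simp

theorem ConvexOn.map_add_le_add_of_tendsto {T : (ι → ℝ) → ι → ℝ} (hT : ConvexOn ℝ (Ici 0) T)
    {x y L : ι → ℝ} (hx : 0 ≤ x) (hy : 0 ≤ y)
    (hL : Tendsto (fun t : ℝ => t⁻¹ • T (t • y)) atTop (𝓝 L)) :
    T (x + y) ≤ T x + L := by
  have h2s : Tendsto (fun s : ℝ => 2 * s) atTop atTop := tendsto_id.const_mul_atTop two_pos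
  have hlim : Tendsto (fun s : ℝ => (1 - s⁻¹) • T x + (2 * s)⁻¹ • T ((2 : ℝ) • x)
      + (2 * s)⁻¹ • T ((2 * s) • y)) atTop (𝓝 (T x + L)) := by
    have h1 : Tendsto (fun s : ℝ => (1 - s⁻¹) • T x) atTop (𝓝 (T x)) := by
      simpa using ((tendsto_const_nhds (x := (1 : ℝ))).sub tendsto_inv_atTop_zero).smul_const (T x)
    have h2 : Tendsto (fun s : ℝ => (2 * s)⁻¹ • T ((2 : ℝ) • x)) atTop (𝓝 0) := by
      simpa using (tendsto_inv_atTop_zero.comp h2s).smul_const (T ((2 : ℝ) • x))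
    simpa using (h1.add h2).add (hL.comp h2s)
  refine ge_of_tendsto hlim ?_
  filter_upwards [eventually_ge_atTop 1] with s hs
  have hs0 : 0 < s := one_pos.trans_le hs
  have hsy : 0 ≤ s • y := smul_nonneg hs0.le hy
  -- `x + y` is a convex combination of `x`, `2 • x` and `(2 * s) • y`.
  calc T (x + y) = T ((1 - s⁻¹) • x + s⁻¹ • (x + s • y)) := by
        congr 1
        rw [smul_add, smul_smul, inv_mul_cancel₀ hs0.ne', one_smul, sub_smul, one_smul]
        abel
    _ ≤ (1 - s⁻¹) • T x + s⁻¹ • T (x + s • y) :=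
        hT.2 hx (add_nonneg hx hsy) (sub_nonneg.2 (inv_le_one_of_one_le₀ hs))
          (inv_nonneg.2 hs0.le) (by ring)
    _ ≤ (1 - s⁻¹) • T x + s⁻¹ • ((2⁻¹ : ℝ) • T ((2 : ℝ) • x) + (2⁻¹ : ℝ) • T ((2 * s) • y)) := by
        gcongr
        calc T (x + s • y) = T ((2⁻¹ : ℝ) • (2 : ℝ) • x + (2⁻¹ : ℝ) • (2 * s) • y) := by
              congr 1
              module
          _ ≤ _ := hT.2 (smul_nonneg zero_le_two hx) (smul_nonneg (by positivity) hy)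
              (by norm_num) (by norm_num) (by norm_num)
    _ = (1 - s⁻¹) • T x + (2 * s)⁻¹ • T ((2 : ℝ) • x) + (2 * s)⁻¹ • T ((2 * s) • y) := by
        rw [smul_add, smul_smul, smul_smul, ← mul_inv, mul_comm s 2, add_assoc]

namespace HasAsymptoticMap

variable {T S : (ι → ℝ) → ι → ℝ}

theorem map_zero (hS : HasAsymptoticMap T S) : S 0 = 0 := by
  have h := hS 0 le_rfl
  simp only [smul_zero] at h
  exact tendsto_nhds_unique h (by simpa using (tendsto_inv_atTop_zero (𝕜 := ℝ)).smul_const (T 0))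

theorem map_smul (hS : HasAsymptoticMap T S) {s : ℝ} (hs : 0 ≤ s) {x : ι → ℝ} (hx : 0 ≤ x) :
    S (s • x) = s • S x := by
  rcases hs.eq_or_lt with rfl | hs
  · simp [hS.map_zero]
  refine tendsto_nhds_unique (hS _ (smul_nonneg hs.le hx)) ?_
  refine (((hS x hx).comp (tendsto_id.atTop_mul_const hs)).const_smul s).congr' ?_
  filter_upwards [eventually_gt_atTop 0] with t ht
  simp only [Function.comp_apply, id, smul_smul, mul_inv]
  congr 1
  field_simp

theorem monotoneOn (hS : HasAsymptoticMap T S) (hT : MonotoneOn T (Ici 0)) :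
    MonotoneOn S (Ici 0) := by
  intro x (hx : 0 ≤ x) y (hy : 0 ≤ y) hxy
  refine le_of_tendsto_of_tendsto (hS x hx) (hS y hy) ?_
  filter_upwards [eventually_ge_atTop 0] with t ht
  exact smul_le_smul_of_nonneg_left (hT (smul_nonneg ht hx) (smul_nonneg ht hy)
    (smul_le_smul_of_nonneg_left hxy ht)) (inv_nonneg.2 ht)

theorem map_add_le (hS : HasAsymptoticMap T S) (hT : ConvexOn ℝ (Ici 0) T) {x y : ι → ℝ}
    (hx : 0 ≤ x) (hy : 0 ≤ y) : S (x + y) ≤ S x + S y := by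
  refine le_of_tendsto_of_tendsto (hS _ (add_nonneg hx hy)) ((hS x hx).add_const (S y)) ?_
  filter_upwards [eventually_gt_atTop 0] with t ht
  have hrec := hT.map_add_le_add_of_tendsto (smul_nonneg ht.le hx) (smul_nonneg ht.le hy)
    (hS _ (smul_nonneg ht.le hy))
  rw [hS.map_smul ht.le hy, ← smul_add] at hrec
  calc t⁻¹ • T (t • (x + y)) ≤ t⁻¹ • (T (t • x) + t • S y) :=
        smul_le_smul_of_nonneg_left hrec (inv_nonneg.2 ht.le)
    _ = t⁻¹ • T (t • x) + S y := by rw [smul_add, smul_smul, inv_mul_cancel₀ ht.ne', one_smul]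

theorem isMonotoneSublinear (hS : HasAsymptoticMap T S) (hmono : MonotoneOn T (Ici 0))
    (hconv : ConvexOn ℝ (Ici 0) T) : IsMonotoneSublinear S :=
  ⟨hS.monotoneOn hmono, fun _ hs _ hx => hS.map_smul hs hx,
    fun _ _ hx hy => hS.map_add_le hconv hx hy⟩

theorem le_smul_of_isContractiveWith (hS : HasAsymptoticMap T S) {v : ι → ℝ} {c : ℝ}
    (hv : 0 ≤ v) (hT : IsContractiveWith T v c) : S v ≤ c • v := by
  have hlim : Tendsto (fun t : ℝ => t⁻¹ • T 0 + c • v) atTop (𝓝 (c • v)) := by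
    simpa using ((tendsto_inv_atTop_zero (𝕜 := ℝ)).smul_const (T 0)).add_const (c • v)
  refine le_of_tendsto_of_tendsto (hS v hv) hlim ?_
  filter_upwards [eventually_gt_atTop 0] with t ht
  have h := hT 0 le_rfl t ht
  rw [zero_add] at h
  calc t⁻¹ • T (t • v) ≤ t⁻¹ • (T 0 + (c * t) • v) :=
        smul_le_smul_of_nonneg_left h (inv_nonneg.2 ht.le)
    _ = t⁻¹ • T 0 + c • v := by
        rw [smul_add, smul_smul, mul_comm c, ← mul_assoc, inv_mul_cancel₀ ht.ne', one_mul]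

theorem isContractiveWith_of_le_smul (hS : HasAsymptoticMap T S) (hT : ConvexOn ℝ (Ici 0) T)
    {v : ι → ℝ} {c : ℝ} (hv : 0 ≤ v) (hSv : S v ≤ c • v) : IsContractiveWith T v c := by
  intro x hx ε hε
  calc T (x + ε • v) ≤ T x + S (ε • v) :=
        hT.map_add_le_add_of_tendsto hx (smul_nonneg hε.le hv) (hS _ (smul_nonneg hε.le hv))
    _ = T x + ε • S v := by rw [hS.map_smul hε.le hv]
    _ ≤ T x + (c * ε) • v := by
        rw [mul_comm, mul_smul]
        gcongr

end HasAsymptoticMap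

theorem exists_gt_smul_le [Fintype ι] [Nonempty ι] {z w : ι → ℝ} {r : ℝ} (hz : ∀ i, 0 < z i)
    (h : ∀ i, r * z i < w i) : ∃ r' > r, r' • z ≤ w :=
  ⟨Finset.univ.inf' Finset.univ_nonempty fun i => w i / z i,
    (Finset.lt_inf'_iff _).2 fun i _ => (lt_div_iff₀ (hz i)).2 (h i),
    fun i => (le_div_iff₀ (hz i)).1 (Finset.inf'_le _ (Finset.mem_univ i))⟩

namespace IsMonotoneSublinear

variable {S : (ι → ℝ) → ι → ℝ}

theorem map_zero (hS : IsMonotoneSublinear S) : S 0 = 0 := by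
  simpa using hS.map_smul le_rfl (le_refl (0 : ι → ℝ))

theorem nonneg (hS : IsMonotoneSublinear S) {x : ι → ℝ} (hx : 0 ≤ x) : 0 ≤ S x :=
  hS.map_zero ▸ hS.monotoneOn (mem_Ici.2 le_rfl) hx hx

theorem le_add_smul_one (hS : IsMonotoneSublinear S) {x y : ι → ℝ} {d : ℝ} (hx : 0 ≤ x)
    (hy : 0 ≤ y) (hd : 0 ≤ d) (hxy : x ≤ y + d • 1) : S x ≤ S y + d • S 1 := by
  have hd1 : (0 : ι → ℝ) ≤ d • 1 := smul_nonneg hd zero_le_one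
  calc S x ≤ S (y + d • 1) := hS.monotoneOn hx (mem_Ici.2 (add_nonneg hy hd1)) hxy
    _ ≤ S y + S (d • 1) := hS.map_add_le hy hd1
    _ = S y + d • S 1 := by rw [hS.map_smul hd zero_le_one]

theorem le_of_eigenvector (hS : IsMonotoneSublinear S) {u v : ι → ℝ} {c lam : ℝ} [Finite ι]
    (hv : ∀ i, 0 < v i) (hSv : S v ≤ c • v) (hu : 0 ≤ u) (hu0 : u ≠ 0) (hSu : S u = lam • u) :
    lam ≤ c := by
  obtain ⟨j, hj⟩ := Function.ne_iff.1 hu0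
  have : Nonempty ι := ⟨j⟩
  obtain ⟨i, hi⟩ := Finite.exists_max fun k => u k / v k
  set m := u i / v i
  have hm : 0 < m := (div_pos ((hu j).lt_of_ne' hj) (hv j)).trans_le (hi j)
  have hmv : 0 ≤ m • v := smul_nonneg hm.le fun k => (hv k).le
  have hum : u ≤ m • v := fun k => (div_le_iff₀ (hv k)).1 (hi k)
  have hSum : S u ≤ m • S v := by
    rw [← hS.map_smul hm.le fun k => (hv k).le]
    exact hS.monotoneOn hu (mem_Ici.2 hmv) hum
  have hui : u i = m * v i := (div_mul_cancel₀ _ (hv i).ne').symm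
  refine le_of_mul_le_mul_right ?_ (hui ▸ mul_pos hm (hv i))
  calc lam * u i = S u i := (congrFun hSu i).symm
    _ ≤ m * S v i := hSum i
    _ ≤ m * (c * v i) := mul_le_mul_of_nonneg_left (hSv i) hm.le
    _ = c * u i := by rw [hui]; ring

variable [Fintype ι]

theorem continuousOn (hS : IsMonotoneSublinear S) : ContinuousOn S (Ici 0) := by
  have hle : ∀ {x y : ι → ℝ}, 0 ≤ x → 0 ≤ y → ∀ i, S x i - S y i ≤ ‖S 1‖ * dist x y := by
    intro x y hx hy i
    have hxy : x ≤ y + dist x y • 1 := fun j => by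
      have := (le_abs_self (x j - y j)).trans ((Real.dist_eq _ _).symm.le.trans
        (dist_le_pi_dist x y j))
      simp only [Pi.add_apply, Pi.smul_apply, Pi.one_apply, smul_eq_mul, mul_one]
      linarith
    have h1 := hS.le_add_smul_one hx hy dist_nonneg hxy i
    have h2 : S 1 i ≤ ‖S 1‖ := (le_abs_self _).trans (norm_le_pi_norm (S 1) i)
    simp only [Pi.add_apply, Pi.smul_apply, smul_eq_mul] at h1
    nlinarith [dist_nonneg (x := x) (y := y)]
  refine (LipschitzOnWith.of_dist_le_mul (K := ‖S 1‖₊) fun x hx y hy => ?_).continuousOn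
  rw [coe_nnnorm, dist_pi_le_iff (by positivity)]
  intro i
  rw [Real.dist_eq, abs_sub_le_iff]
  exact ⟨hle hx hy i, dist_comm x y ▸ hle hy hx i⟩

theorem bddAbove_coneEigenvalues (hS : IsMonotoneSublinear S) : BddAbove (coneEigenvalues S) :=
  ⟨‖S 1‖, fun _ ⟨_, _, hu, hu0, hSu⟩ => hS.le_of_eigenvector (v := 1) (fun _ => one_pos)
    (fun i => by simpa using (le_abs_self _).trans (norm_le_pi_norm (S 1) i)) hu hu0 hSu⟩

theorem coneSpectralRadius_le (hS : IsMonotoneSublinear S) {v : ι → ℝ} {c : ℝ}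
    (hv : ∀ i, 0 < v i) (hc : 0 ≤ c) (hSv : S v ≤ c • v) : coneSpectralRadius S ≤ c :=
  Real.sSup_le (fun _ ⟨_, _, hu, hu0, hSu⟩ => hS.le_of_eigenvector hv hSv hu hu0 hSu) hc

theorem le_sum_of_smul_le (hS : IsMonotoneSublinear S) {x : ι → ℝ} (hx : x ∈ stdSimplex ℝ ι)
    {r δ : ℝ} (h : r • x ≤ S x + δ • 1) : r ≤ ∑ i, (S 1 i + δ) := by
  have hSx : S x ≤ S 1 := hS.monotoneOn (stdSimplex_subset_Icc ℝ hx).1 (mem_Ici.2 zero_le_one)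
    (stdSimplex_subset_Icc ℝ hx).2
  calc r = ∑ i, r * x i := by rw [← Finset.mul_sum, hx.2, mul_one]
    _ ≤ ∑ i, (S 1 i + δ) := Finset.sum_le_sum fun i _ => by
        have := h i
        simp only [Pi.add_apply, Pi.smul_apply, Pi.one_apply, smul_eq_mul, mul_one] at this
        linarith [hSx i]

theorem exists_gt_of_smul_le_of_ne (hS : IsMonotoneSublinear S) {δ : ℝ} (hδ : 0 < δ)
    {x : ι → ℝ} (hx : x ∈ stdSimplex ℝ ι) {r : ℝ} (hr : 0 ≤ r) (hle : r • x ≤ S x + δ • 1)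
    (hne : r • x ≠ S x + δ • 1) :
    ∃ z ∈ stdSimplex ℝ ι, ∃ r' > r, r' • z ≤ S z + δ • 1 := by
  have hx0 : 0 ≤ x := hx.1
  set y := S x + δ • 1 with hy_def
  have hy : ∀ i, 0 < y i := fun i => by
    simpa [hy_def] using add_pos_of_nonneg_of_pos (hS.nonneg hx0 i) hδ
  have hy0 : 0 ≤ y := fun i => (hy i).le
  obtain ⟨-, i₀, hi₀⟩ := Pi.lt_def.1 (lt_of_le_of_ne hle hne)
  have : Nonempty ι := ⟨i₀⟩
  set σ := ∑ i, y i
  have hrσ : r < σ :=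
    calc r = ∑ i, r * x i := by rw [← Finset.mul_sum, hx.2, mul_one]
      _ < σ := Finset.sum_lt_sum (fun i _ => hle i) ⟨i₀, Finset.mem_univ _, hi₀⟩
  have hσ : 0 < σ := hr.trans_lt hrσ
  -- The mass gap `r < σ` makes the perturbation `δ • 1` separate `S y + (δ * σ) • 1` from `r • y`.
  have hry : ∀ i, r * y i < S y i + δ * σ := fun i => by
    have hSy : r • S x ≤ S y :=
      hS.map_smul hr hx0 ▸ hS.monotoneOn (mem_Ici.2 (smul_nonneg hr hx0)) hy0 hle
    have hyi : y i = S x i + δ := by simp [hy_def]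
    have := hSy i
    simp only [Pi.smul_apply, smul_eq_mul] at this
    nlinarith
  have hSz : S (σ⁻¹ • y) = σ⁻¹ • S y := hS.map_smul (inv_nonneg.2 hσ.le) hy0
  refine ⟨σ⁻¹ • y, ⟨fun i => mul_nonneg (inv_nonneg.2 hσ.le) (hy i).le, ?_⟩,
    exists_gt_smul_le (fun i => mul_pos (inv_pos.2 hσ) (hy i)) fun i => ?_⟩
  · simp only [Pi.smul_apply, smul_eq_mul, ← Finset.mul_sum]
    exact inv_mul_cancel₀ hσ.ne'
  · calc r * (σ⁻¹ • y) i = σ⁻¹ * (r * y i) := by simp only [Pi.smul_apply, smul_eq_mul]; ring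
      _ < σ⁻¹ * (S y i + δ * σ) := mul_lt_mul_of_pos_left (hry i) (inv_pos.2 hσ)
      _ = (S (σ⁻¹ • y) + δ • 1) i := by
        rw [hSz]
        simp only [Pi.add_apply, Pi.smul_apply, Pi.one_apply, smul_eq_mul]
        field_simp

theorem exists_perturbed_eigenvector [Nonempty ι] (hS : IsMonotoneSublinear S) {δ : ℝ}
    (hδ : 0 < δ) : ∃ x ∈ stdSimplex ℝ ι, ∃ r : ℝ, S x + δ • 1 = r • x := by
  classical
  set M := ∑ i, (S 1 i + δ)
  set K := stdSimplex ℝ ι ×ˢ Icc 0 M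
  set A := {p : (ι → ℝ) × ℝ | p ∈ K ∧ p.2 • p.1 ≤ S p.1 + δ • 1}
  have hSK : ContinuousOn (fun p : (ι → ℝ) × ℝ => S p.1 + δ • 1) K :=
    (hS.continuousOn.comp continuousOn_fst fun p hp => (stdSimplex_subset_Icc ℝ hp.1).1).add
      continuousOn_const
  have hA : IsCompact A := ((isCompact_stdSimplex ℝ ι).prod isCompact_Icc).of_isClosed_subset
    (((isClosed_stdSimplex ℝ ι).prod isClosed_Icc).isClosed_le (by fun_prop) hSK)
    fun p hp => hp.1
  obtain ⟨i₀⟩ := ‹Nonempty ι›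
  have hA0 : (Pi.single i₀ 1, (0 : ℝ)) ∈ A := by
    refine ⟨⟨single_mem_stdSimplex ℝ i₀, le_rfl, ?_⟩, ?_⟩
    · exact Finset.sum_nonneg fun i _ => add_nonneg (hS.nonneg zero_le_one i) hδ.le
    · simpa using add_nonneg (hS.nonneg (single_mem_stdSimplex ℝ i₀).1)
        (smul_nonneg hδ.le zero_le_one)
  obtain ⟨⟨x, r⟩, ⟨⟨hx, hr, -⟩, hle⟩, hmax⟩ := hA.exists_isMaxOn ⟨_, hA0⟩ continuousOn_snd
  refine ⟨x, hx, r, ?_⟩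
  by_contra hne
  obtain ⟨z, hz, r', hr', hz'⟩ := hS.exists_gt_of_smul_le_of_ne hδ hx hr hle (Ne.symm hne)
  have hzA : (z, r') ∈ A := ⟨⟨hz, hr.trans hr'.le, hS.le_sum_of_smul_le hz hz'⟩, hz'⟩
  exact (isMaxOn_iff.1 hmax _ hzA).not_gt hr'

theorem one_le_of_perturbed_eigenvector [Nonempty ι] (hS : IsMonotoneSublinear S)
    (h : ¬ ∃ (v : ι → ℝ) (c : ℝ), (∀ i, 0 < v i) ∧ 0 ≤ c ∧ c < 1 ∧ S v ≤ c • v)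
    {δ r : ℝ} (hδ : 0 < δ) {x : ι → ℝ} (hx : x ∈ stdSimplex ℝ ι) (hxr : S x + δ • 1 = r • x) :
    1 ≤ r := by
  have hrx : ∀ i, 0 < r * x i := fun i => by
    have := congrFun hxr i
    simp only [Pi.add_apply, Pi.smul_apply, Pi.one_apply, smul_eq_mul, mul_one] at this
    have hSx : 0 ≤ S x i := hS.nonneg hx.1 i
    linarith
  obtain ⟨i₀⟩ := ‹Nonempty ι›
  have hr : 0 < r := pos_of_mul_pos_left (hrx i₀) (hx.1 i₀)
  by_contra! hr1
  exact h ⟨x, r, fun i => pos_of_mul_pos_right (hrx i) hr.le, hr.le, hr1,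
    hxr ▸ le_add_of_nonneg_right (smul_nonneg hδ.le zero_le_one)⟩

theorem exists_eigenvector_one_le [Nonempty ι] (hS : IsMonotoneSublinear S)
    (h : ¬ ∃ (v : ι → ℝ) (c : ℝ), (∀ i, 0 < v i) ∧ 0 ≤ c ∧ c < 1 ∧ S v ≤ c • v) :
    ∃ u ∈ stdSimplex ℝ ι, ∃ lam : ℝ, 1 ≤ lam ∧ S u = lam • u := by
  set M := ∑ i, (S 1 i + 1)
  have hpert : ∀ δ ∈ Ioc (0 : ℝ) 1,
      ∃ x ∈ stdSimplex ℝ ι, ∃ r ∈ Icc 1 M, S x + δ • 1 = r • x := by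
    rintro δ ⟨hδ, hδ1⟩
    obtain ⟨x, hx, r, hxr⟩ := hS.exists_perturbed_eigenvector hδ
    refine ⟨x, hx, r, ⟨hS.one_le_of_perturbed_eigenvector h hδ hx hxr,
      (hS.le_sum_of_smul_le hx hxr.symm.le).trans ?_⟩, hxr⟩
    exact Finset.sum_le_sum fun i _ => by linarith
  set K := stdSimplex ℝ ι ×ˢ Icc 1 M ×ˢ Icc (0 : ℝ) 1
  set B := {p : (ι → ℝ) × ℝ × ℝ | p ∈ K ∧ S p.1 + p.2.2 • 1 = p.2.1 • p.1}
  have hB : IsCompact B :=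
    ((isCompact_stdSimplex ℝ ι).prod (isCompact_Icc.prod isCompact_Icc)).of_isClosed_subset
      (((isClosed_stdSimplex ℝ ι).prod (isClosed_Icc.prod isClosed_Icc)).isClosed_eq
        ((hS.continuousOn.comp continuousOn_fst fun p hp => (stdSimplex_subset_Icc ℝ hp.1).1).add
          (by fun_prop)) (by fun_prop))
      fun p hp => hp.1
  -- The `δ`-coordinates of `B` form a closed set containing `(0, 1]`, hence `0`.
  have h0 : (0 : ℝ) ∈ (fun p => p.2.2) '' B := by
    refine ((hB.image continuous_snd.snd).isClosed.closure_subset_iff.2 ?_)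
      (by rw [closure_Ioc zero_ne_one]; exact ⟨le_rfl, zero_le_one⟩)
    intro δ hδ
    obtain ⟨x, hx, r, hr, hxr⟩ := hpert δ hδ
    exact ⟨(x, r, δ), ⟨⟨hx, hr, Ioc_subset_Icc_self hδ⟩, hxr⟩, rfl⟩
  obtain ⟨⟨u, lam, _⟩, ⟨⟨hu, hlam, -⟩, hSu⟩, rfl⟩ := h0
  exact ⟨u, hu, lam, hlam.1, by simpa using hSu⟩

theorem exists_le_smul_of_coneSpectralRadius_lt_one [Nonempty ι] (hS : IsMonotoneSublinear S)
    (hρ : coneSpectralRadius S < 1) :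
    ∃ (v : ι → ℝ) (c : ℝ), (∀ i, 0 < v i) ∧ 0 ≤ c ∧ c < 1 ∧ S v ≤ c • v := by
  by_contra h
  obtain ⟨u, hu, lam, hlam, hSu⟩ := hS.exists_eigenvector_one_le h
  have hu0 : u ≠ 0 := by
    rintro rfl
    simpa using hu.2
  have := le_csSup hS.bddAbove_coneEigenvalues ⟨zero_le_one.trans hlam, u, hu.1, hu0, hSu⟩
  exact (hlam.trans this).not_gt hρ

end IsMonotoneSublinear

theorem stmt_10_general (N : ℕ) (hN : 1 ≤ N)
    (T : (Fin N → ℝ) → (Fin N → ℝ))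
    (hT_conv : ∀ i : Fin N, ConvexOn ℝ {x : Fin N → ℝ | ∀ j, 0 ≤ x j} (fun x => T x i))
    (hT_mono : ∀ x y : Fin N → ℝ, (∀ i, 0 ≤ x i) → (∀ i, 0 ≤ y i) → x ≤ y → T x ≤ T y)
    (hT_scal : ∀ α : ℝ, 1 < α → ∀ x : Fin N → ℝ, (∀ i, 0 ≤ x i) →
      ∀ i : Fin N, T (α • x) i < α * T x i)
    (S : (Fin N → ℝ) → (Fin N → ℝ))
    (hS : ∀ x : Fin N → ℝ, (∀ i, 0 ≤ x i) →
      Tendsto (fun t : ℝ => t⁻¹ • T (t • x)) atTop (𝓝 (S x))) :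
    (∀ x : Fin N → ℝ, (∀ i, 0 ≤ x i) → ∀ i : Fin N,
      AntitoneOn (fun t : ℝ => T (t • x) i / t) (Set.Ioi (0 : ℝ))) ∧
    ((∃ (v : Fin N → ℝ) (c : ℝ), (∀ i, 0 < v i) ∧ 0 ≤ c ∧ c < 1 ∧
        ∀ x : Fin N → ℝ, (∀ i, 0 ≤ x i) → ∀ ε : ℝ, 0 < ε →
          ∀ i : Fin N, T (x + ε • v) i ≤ T x i + c * ε * v i) ↔
      sSup {lam : ℝ | 0 ≤ lam ∧
        ∃ u : Fin N → ℝ, (∀ i, 0 ≤ u i) ∧ u ≠ 0 ∧ S u = lam • u} < 1) := by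
  have : Nonempty (Fin N) := Fin.pos_iff_nonempty.1 hN
  have hasym : HasAsymptoticMap T S := hS
  have hconv : ConvexOn ℝ (Ici 0) T := ⟨convex_Ici 0, fun x hx y hy a b ha hb hab i =>
    (hT_conv i).2 hx hy ha hb hab⟩
  have hsub : IsMonotoneSublinear S :=
    hasym.isMonotoneSublinear (fun x hx y hy => hT_mono x y hx hy) hconv
  refine ⟨fun x hx i => antitoneOn_apply_smul_div
    (fun α hα x hx i => (hT_scal α hα x hx i).le) hx i, ⟨?_, fun hρ => ?_⟩⟩
  · rintro ⟨v, c, hv, hc0, hc1, hcon⟩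
    exact (hsub.coneSpectralRadius_le hv hc0
      (hasym.le_smul_of_isContractiveWith (fun i => (hv i).le) hcon)).trans_lt hc1
  · obtain ⟨v, c, hv, hc0, hc1, hSv⟩ := hsub.exists_le_smul_of_coneSpectralRadius_lt_one hρ
    exact ⟨v, c, hv, hc0, hc1, hasym.isContractiveWith_of_le_smul hconv (fun i => (hv i).le) hSv⟩

/-- Let `T : ℝ₊^N → ℝ₊₊^N` be a convex standard interference mapping. For each
`x ∈ ℝ₊^N` the map `t ↦ T(tx)/t` is coordinatewise nonincreasing on `(0,∞)`, and with
`S(x) := lim_{t→∞} T(tx)/t` (the asymptotic mapping, given via the `Tendsto` hypothesis),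
`T` is contractive if and only if `ρ(S) < 1`. -/
theorem stmt_10 (N : ℕ) (hN : 1 ≤ N)
    (T : (Fin N → ℝ) → (Fin N → ℝ))
    (hT_pos : ∀ x : Fin N → ℝ, (∀ i, 0 ≤ x i) → ∀ i, 0 < T x i)
    (hT_cont : ContinuousOn T {x : Fin N → ℝ | ∀ i, 0 ≤ x i})
    (hT_conv : ∀ i : Fin N, ConvexOn ℝ {x : Fin N → ℝ | ∀ j, 0 ≤ x j} (fun x => T x i))
    (hT_mono : ∀ x y : Fin N → ℝ, (∀ i, 0 ≤ x i) → (∀ i, 0 ≤ y i) → x ≤ y → T x ≤ T y)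
    (hT_scal : ∀ α : ℝ, 1 < α → ∀ x : Fin N → ℝ, (∀ i, 0 ≤ x i) →
      ∀ i : Fin N, T (α • x) i < α * T x i)
    (S : (Fin N → ℝ) → (Fin N → ℝ))
    (hS : ∀ x : Fin N → ℝ, (∀ i, 0 ≤ x i) →
      Tendsto (fun t : ℝ => t⁻¹ • T (t • x)) atTop (𝓝 (S x))) :
    (∀ x : Fin N → ℝ, (∀ i, 0 ≤ x i) → ∀ i : Fin N,
      AntitoneOn (fun t : ℝ => T (t • x) i / t) (Set.Ioi (0 : ℝ))) ∧
    ((∃ (v : Fin N → ℝ) (c : ℝ), (∀ i, 0 < v i) ∧ 0 ≤ c ∧ c < 1 ∧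
        ∀ x : Fin N → ℝ, (∀ i, 0 ≤ x i) → ∀ ε : ℝ, 0 < ε →
          ∀ i : Fin N, T (x + ε • v) i ≤ T x i + c * ε * v i) ↔
      sSup {lam : ℝ | 0 ≤ lam ∧
        ∃ u : Fin N → ℝ, (∀ i, 0 ≤ u i) ∧ u ≠ 0 ∧ S u = lam • u} < 1) :=
  stmt_10_general N hN T hT_conv hT_mono hT_scal S hS
end

section
/- Let T : ℝ₊^N → ℝ₊₊^N be continuous and concave (each coordinate function concave on ℝ₊^N), and let x* ∈ ℝ₊^N satisfy T(x*) = x*. For each d ∈ ℝ₊^N the function t ↦ T(td)/t is coordinatewise nonincreasing on (0,∞), so the asymptotic mapping S(d) := lim_{t→∞} T(td)/t exists in ℝ₊^N. Suppose v ∈ ℝ₊^N \ {0} and ρ ≥ 0 satisfy S(v) = ρv. Then for every n ≥ 1 and every ε > 0, the n-fold iterate of T satisfies T^n(x* + εv) ≥ x* + ρ^n ε v. -/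
/-!
A concave function that is bounded below on a set containing `x` and the ray `x + s (y - x)`,
`s ≥ 1`, satisfies `f x ≤ f y`; hence a positive concave map of the orthant is monotone.
Writing `x* + εv` as the convex combination `(1 - ε/t) x* + (ε/t) (x* + tv)` and using
monotonicity, `T(x* + εv) ≥ (1 - ε/t) x* + ε T(tv)/t`, which tends to `x* + ε S(v) = x* + ερv`
as `t → ∞`. Iterating this one-step bound with monotonicity of `T` gives the claim.
-/
open Filter Topology

section Concave

variable {E : Type*} [AddCommGroup E] [Module ℝ E] {C : Set E} {f : E → ℝ}

theorem ConcaveOn.le_of_forall_add_smul_sub_mem (hf : ConcaveOn ℝ C f) (hbdd : BddBelow (f '' C))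
    {x y : E} (hx : x ∈ C) (hray : ∀ s : ℝ, 1 ≤ s → x + s • (y - x) ∈ C) : f x ≤ f y := by
  obtain ⟨m, hm⟩ := hbdd
  have hlim : Tendsto (fun s : ℝ => (1 - s⁻¹) * f x + s⁻¹ * m) atTop (𝓝 (f x)) := by
    have hinv := tendsto_inv_atTop_zero (𝕜 := ℝ)
    simpa using ((hinv.const_sub 1).mul_const (f x)).add (hinv.mul_const m)
  refine le_of_tendsto hlim (eventually_atTop.2 ⟨1, fun s hs => ?_⟩)
  have hs0 : 0 < s := one_pos.trans_le hs
  have hz := hray s hs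
  have hcomb : (1 - s⁻¹) • x + s⁻¹ • (x + s • (y - x)) = y := by
    rw [smul_add, smul_smul, inv_mul_cancel₀ hs0.ne']
    module
  have hconc := hf.2 hx hz (sub_nonneg.2 (inv_le_one_of_one_le₀ hs)) (inv_nonneg.2 hs0.le)
    (sub_add_cancel 1 s⁻¹)
  rw [hcomb, smul_eq_mul, smul_eq_mul] at hconc
  have hmz : m ≤ f (x + s • (y - x)) := hm ⟨_, hz, rfl⟩
  nlinarith [inv_nonneg.2 hs0.le]

theorem ConcaveOn.add_mul_le_of_tendsto (hf : ConcaveOn ℝ C f) {x d : E}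
    (hray : ∀ t : ℝ, 0 ≤ t → x + t • d ∈ C) {g : ℝ → ℝ}
    (hg : ∀ᶠ t in atTop, g t ≤ f (x + t • d)) {L : ℝ}
    (hL : Tendsto (fun t => t⁻¹ * g t) atTop (𝓝 L)) {ε : ℝ} (hε : 0 ≤ ε) :
    f x + ε * L ≤ f (x + ε • d) := by
  have hlim : Tendsto (fun t : ℝ => (1 - ε * t⁻¹) * f x + ε * (t⁻¹ * g t)) atTop
      (𝓝 (f x + ε * L)) := by
    have hinv := (tendsto_inv_atTop_zero (𝕜 := ℝ)).const_mul ε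
    simpa using ((hinv.const_sub 1).mul_const (f x)).add (hL.const_mul ε)
  refine le_of_tendsto hlim ?_
  filter_upwards [hg, eventually_gt_atTop 0, eventually_ge_atTop ε] with t hgt ht0 htε
  have hx := hray 0 le_rfl
  rw [zero_smul, add_zero] at hx
  have hcomb : (1 - ε * t⁻¹) • x + (ε * t⁻¹) • (x + t • d) = x + ε • d := by
    rw [smul_add, smul_smul, mul_assoc, inv_mul_cancel₀ ht0.ne', mul_one]
    module
  have hle : ε * t⁻¹ ≤ 1 := by rw [← div_eq_mul_inv, div_le_one ht0]; exact htε
  have hconc := hf.2 hx (hray t ht0.le) (sub_nonneg.2 hle)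
    (mul_nonneg hε (inv_nonneg.2 ht0.le)) (sub_add_cancel 1 _)
  rw [hcomb, smul_eq_mul, smul_eq_mul] at hconc
  have : ε * (t⁻¹ * g t) ≤ ε * t⁻¹ * f (x + t • d) := by
    rw [mul_assoc]
    gcongr
  linarith

theorem ConcaveOn.monotoneOn_Ici [PartialOrder E] [IsOrderedAddMonoid E] [PosSMulMono ℝ E]
    {a : E} (hf : ConcaveOn ℝ (Set.Ici a) f) (hbdd : BddBelow (f '' Set.Ici a)) :
    MonotoneOn f (Set.Ici a) := by
  intro x hx y _ hxy
  refine hf.le_of_forall_add_smul_sub_mem hbdd hx fun s hs => ?_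
  have : 0 ≤ s • (y - x) := smul_nonneg (zero_le_one.trans hs) (sub_nonneg.2 hxy)
  exact le_add_of_le_of_nonneg hx this

end Concave

theorem MonotoneOn.le_iterate_of_le_apply {α : Type*} [Preorder α] {C : Set α} {T : α → α}
    (hT : MonotoneOn T C) (hC : IsUpperSet C) {u : ℕ → α} (hu : ∀ k, u k ∈ C)
    (hstep : ∀ k, u (k + 1) ≤ T (u k)) (n : ℕ) : u n ≤ T^[n] (u 0) := by
  induction n with
  | zero => rfl
  | succ n ih =>
    rw [Function.iterate_succ_apply']
    exact (hstep n).trans (hT (hu n) (hC ih (hu n)) ih)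

section Orthant

variable {ι : Type*} {T : (ι → ℝ) → ι → ℝ}

theorem monotoneOn_of_concaveOn_of_nonneg (hT : ∀ i, ConcaveOn ℝ (Set.Ici 0) (fun x => T x i))
    (hT0 : ∀ x, 0 ≤ x → 0 ≤ T x) : MonotoneOn T (Set.Ici 0) := by
  intro x hx y hy hxy i
  refine (hT i).monotoneOn_Ici ⟨0, ?_⟩ hx hy hxy
  rintro _ ⟨z, hz, rfl⟩
  exact hT0 z hz i

theorem add_smul_le_apply_add_smul_of_tendsto (hT : ∀ i, ConcaveOn ℝ (Set.Ici 0) (fun x => T x i))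
    (hmono : MonotoneOn T (Set.Ici 0)) {x d s : ι → ℝ} (hx : 0 ≤ x) (hfix : T x = x)
    (hd : 0 ≤ d) (hs : Tendsto (fun t : ℝ => t⁻¹ • T (t • d)) atTop (𝓝 s)) {ε : ℝ}
    (hε : 0 ≤ ε) : x + ε • s ≤ T (x + ε • d) := by
  have hray : ∀ t : ℝ, 0 ≤ t → x + t • d ∈ Set.Ici 0 := fun t ht =>
    add_nonneg hx (smul_nonneg ht hd)
  intro i
  have hle : ∀ᶠ t : ℝ in atTop, T (t • d) i ≤ T (x + t • d) i := by
    filter_upwards [eventually_ge_atTop 0] with t ht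
    exact hmono (smul_nonneg ht hd) (hray t ht) (le_add_of_nonneg_left hx) i
  have hsi : Tendsto (fun t : ℝ => t⁻¹ * T (t • d) i) atTop (𝓝 (s i)) :=
    ((continuous_apply i).tendsto s).comp hs
  simpa [hfix] using (hT i).add_mul_le_of_tendsto hray hle hsi hε

end Orthant

theorem stmt_11_general (N : ℕ)
    (T : (Fin N → ℝ) → (Fin N → ℝ))
    (hT_pos : ∀ x : Fin N → ℝ, (∀ i, 0 ≤ x i) → ∀ i, 0 < T x i)
    (hT_conc : ∀ i : Fin N, ConcaveOn ℝ {x : Fin N → ℝ | ∀ j, 0 ≤ x j} (fun x => T x i))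
    (xstar : Fin N → ℝ) (hxstar : ∀ i, 0 ≤ xstar i)
    (hfix : T xstar = xstar)
    (S : (Fin N → ℝ) → (Fin N → ℝ))
    (hS : ∀ d : Fin N → ℝ, (∀ i, 0 ≤ d i) →
      Tendsto (fun t : ℝ => t⁻¹ • T (t • d)) atTop (𝓝 (S d)))
    (v : Fin N → ℝ) (hv_nonneg : ∀ i, 0 ≤ v i)
    (ρ : ℝ) (hρ : 0 ≤ ρ) (heig : S v = ρ • v) :
    ∀ n : ℕ, 1 ≤ n → ∀ ε : ℝ, 0 < ε →
      xstar + (ρ ^ n * ε) • v ≤ T^[n] (xstar + ε • v) := by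
  intro n _ ε hε
  have hx0 : 0 ≤ xstar := hxstar
  have hv0 : 0 ≤ v := hv_nonneg
  have hmono : MonotoneOn T (Set.Ici 0) :=
    monotoneOn_of_concaveOn_of_nonneg hT_conc fun x hx i => (hT_pos x hx i).le
  have hmem : ∀ k : ℕ, xstar + (ρ ^ k * ε) • v ∈ Set.Ici 0 := fun k =>
    add_nonneg hx0 (smul_nonneg (by positivity) hv0)
  have hstep : ∀ k : ℕ, xstar + (ρ ^ (k + 1) * ε) • v ≤ T (xstar + (ρ ^ k * ε) • v) := by
    intro k
    have h := add_smul_le_apply_add_smul_of_tendsto hT_conc hmono hx0 hfix hv0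
      (hS v hv_nonneg) (ε := ρ ^ k * ε) (by positivity)
    rwa [heig, smul_smul, mul_comm _ ρ, ← mul_assoc, ← pow_succ'] at h
  simpa using hmono.le_iterate_of_le_apply (isUpperSet_Ici 0) hmem hstep n

/-- Let `T : ℝ₊^N → ℝ₊₊^N` be continuous and concave with fixed point `x*`, let `S` be
its asymptotic mapping (given via the `Tendsto` hypothesis `S(d) = lim_{t→∞} T(td)/t`),
and suppose `S(v) = ρv` for some `v ∈ ℝ₊^N \ {0}` and `ρ ≥ 0`. Then for every `n ≥ 1`
and `ε > 0`: `T^n(x* + εv) ≥ x* + ρ^n ε v`. -/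
theorem stmt_11 (N : ℕ) (hN : 1 ≤ N)
    (T : (Fin N → ℝ) → (Fin N → ℝ))
    (hT_pos : ∀ x : Fin N → ℝ, (∀ i, 0 ≤ x i) → ∀ i, 0 < T x i)
    (hT_cont : ContinuousOn T {x : Fin N → ℝ | ∀ i, 0 ≤ x i})
    (hT_conc : ∀ i : Fin N, ConcaveOn ℝ {x : Fin N → ℝ | ∀ j, 0 ≤ x j} (fun x => T x i))
    (xstar : Fin N → ℝ) (hxstar : ∀ i, 0 ≤ xstar i)
    (hfix : T xstar = xstar)
    (S : (Fin N → ℝ) → (Fin N → ℝ))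
    (hS : ∀ d : Fin N → ℝ, (∀ i, 0 ≤ d i) →
      Tendsto (fun t : ℝ => t⁻¹ • T (t • d)) atTop (𝓝 (S d)))
    (v : Fin N → ℝ) (hv_nonneg : ∀ i, 0 ≤ v i) (hv_ne : v ≠ 0)
    (ρ : ℝ) (hρ : 0 ≤ ρ) (heig : S v = ρ • v) :
    ∀ n : ℕ, 1 ≤ n → ∀ ε : ℝ, 0 < ε →
      xstar + (ρ ^ n * ε) • v ≤ T^[n] (xstar + ε • v) :=
  stmt_11_general N T hT_pos hT_conc xstar hxstar hfix S hS v hv_nonneg ρ hρ heig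
end

section
/- Let T : ℝ₊^N → ℝ₊₊^N be continuous and concave (each coordinate function concave on ℝ₊^N), and let x* ∈ ℝ₊^N satisfy T(x*) = x*. For each d ∈ ℝ₊^N the function t ↦ T(td)/t is coordinatewise nonincreasing on (0,∞), so the asymptotic mapping S(d) := lim_{t→∞} T(td)/t exists in ℝ₊^N. Suppose v ∈ ℝ₊^N \ {0} and ρ ∈ [0,1) satisfy S(v) = ρv. Then for every ε > 0 with x* ≥ εv and every n ≥ 1, the n-fold iterate of T satisfies T^n(x* − εv) ≤ x* − ρ^n ε v. -/
/-!
A concave map that is nonnegative on the cone is monotone there: along a ray inside the cone a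
concave function bounded below cannot decrease. Writing `x*` as the convex combination
`(s/(s+ε)) (x* - ε v) + (ε/(s+ε)) (x* + s v)` and using `T (s v) ≤ T (x* + s v)` gives
`T (x* - ε v) ≤ (1 + ε/s) x* - ε T (s v) / s`, and `s → ∞` yields `T (x* - ε v) ≤ x* - ρ ε v`.
Monotonicity then propagates this one-step bound, with `ε` replaced by `ρ^k ε`, to the iterates.
-/

open Filter Topology

theorem ConcaveOn.le_of_ray_mem {E : Type*} [AddCommGroup E] [Module ℝ E] {s : Set E}
    {f : E → ℝ} (hf : ConcaveOn ℝ s f) (hf₀ : ∀ z ∈ s, 0 ≤ f z) {x y : E} (hx : x ∈ s)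
    (hray : ∀ t : ℝ, 0 ≤ t → y + t • (y - x) ∈ s) : f x ≤ f y := by
  -- `y` divides the segment from `x` to `y + t • (y - x)` in the ratio `t : 1`
  have hbound : ∀ t : ℝ, 0 ≤ t → t * (f x - f y) ≤ f y := by
    intro t ht
    have h1t : (0 : ℝ) < 1 + t := by positivity
    have hconc := hf.2 (hray t ht) hx (by positivity : (0 : ℝ) ≤ 1 / (1 + t))
      (by positivity : (0 : ℝ) ≤ t / (1 + t)) (by field_simp)
    have hy : (1 / (1 + t)) • (y + t • (y - x)) + (t / (1 + t)) • x = y := by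
      match_scalars <;> field_simp; ring
    rw [hy, smul_eq_mul, smul_eq_mul, div_mul_eq_mul_div, div_mul_eq_mul_div, ← add_div,
      div_le_iff₀ h1t] at hconc
    nlinarith [hf₀ _ (hray t ht)]
  by_contra! hlt
  have hgap : 0 < f x - f y := sub_pos.2 hlt
  have hy₀ : 0 ≤ f y := hf₀ y (by simpa using hray 0 le_rfl)
  have := hbound (f y / (f x - f y) + 1) (by positivity)
  rw [add_mul, div_mul_cancel₀ _ hgap.ne'] at this
  linarith

section OrderedModule

variable {E : Type*} [AddCommGroup E] [PartialOrder E] [IsOrderedAddMonoid E] [Module ℝ E]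
  [PosSMulMono ℝ E]

theorem ConcaveOn.monotoneOn_of_nonneg {f : E → ℝ} (hf : ConcaveOn ℝ (Set.Ici 0) f)
    (hf₀ : ∀ x, 0 ≤ x → 0 ≤ f x) : MonotoneOn f (Set.Ici 0) := by
  intro x hx y hy hxy
  refine hf.le_of_ray_mem hf₀ hx fun t ht => ?_
  exact add_nonneg hy (smul_nonneg ht (sub_nonneg.2 hxy))

theorem ConcaveOn.apply_sub_smul_le [TopologicalSpace E] [IsTopologicalAddGroup E]
    [ContinuousSMul ℝ E] [ClosedIciTopology E] {T : E → E} (hT : ConcaveOn ℝ (Set.Ici 0) T)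
    (hT_mono : MonotoneOn T (Set.Ici 0)) {x₀ v : E} (hx₀ : 0 ≤ x₀) (hfix : T x₀ = x₀)
    (hv : 0 ≤ v) {ρ : ℝ} (hS : Tendsto (fun t : ℝ => t⁻¹ • T (t • v)) atTop (𝓝 (ρ • v)))
    {ε : ℝ} (hε : 0 ≤ ε) (hεv : ε • v ≤ x₀) : T (x₀ - ε • v) ≤ x₀ - (ρ * ε) • v := by
  have hbound : ∀ s : ℝ, 0 < s → T (x₀ - ε • v) ≤ (1 + ε / s) • x₀ - ε • (s⁻¹ • T (s • v)) := by
    intro s hs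
    have hsε : 0 < s + ε := by positivity
    have hsv : 0 ≤ s • v := smul_nonneg hs.le hv
    have hconc := hT.2 (sub_nonneg.2 hεv) (add_nonneg hx₀ hsv)
      (by positivity : 0 ≤ s / (s + ε)) (by positivity : 0 ≤ ε / (s + ε)) (by field_simp)
    have hx₀_eq : (s / (s + ε)) • (x₀ - ε • v) + (ε / (s + ε)) • (x₀ + s • v) = x₀ := by
      match_scalars <;> field_simp; ring
    rw [hx₀_eq, hfix] at hconc
    have hTsv := smul_le_smul_of_nonneg_left
      (hT_mono (show s • v ∈ Set.Ici 0 from hsv) (add_nonneg hx₀ hsv) (le_add_of_nonneg_left hx₀))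
      (by positivity : 0 ≤ ε / (s + ε))
    have := smul_le_smul_of_nonneg_left ((add_le_add le_rfl hTsv).trans hconc)
      (by positivity : 0 ≤ (s + ε) / s)
    rw [le_sub_iff_add_le]
    convert this using 1
    · match_scalars <;> field_simp
    · match_scalars; field_simp
  have hlim : Tendsto (fun s : ℝ => (1 + ε / s) • x₀ - ε • (s⁻¹ • T (s • v))) atTop
      (𝓝 (x₀ - (ρ * ε) • v)) := by
    have h1 : Tendsto (fun s : ℝ => 1 + ε / s) atTop (𝓝 1) := by
      simpa using (tendsto_const_nhds (x := (1 : ℝ))).add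
        ((tendsto_const_nhds (x := ε)).div_atTop tendsto_id)
    convert (h1.smul_const x₀).sub (hS.const_smul ε) using 2
    rw [one_smul, smul_smul, mul_comm]
  exact ge_of_tendsto hlim ((eventually_gt_atTop 0).mono hbound)

theorem iterate_sub_smul_le {T : E → E} (hT_maps : Set.MapsTo T (Set.Ici 0) (Set.Ici 0))
    (hT_mono : MonotoneOn T (Set.Ici 0)) {x₀ v : E} (hv : 0 ≤ v) {ρ : ℝ} (hρ₀ : 0 ≤ ρ)
    (hρ₁ : ρ ≤ 1) (hstep : ∀ ε : ℝ, 0 ≤ ε → ε • v ≤ x₀ → T (x₀ - ε • v) ≤ x₀ - (ρ * ε) • v)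
    {ε : ℝ} (hε : 0 ≤ ε) (hεv : ε • v ≤ x₀) (n : ℕ) :
    T^[n] (x₀ - ε • v) ≤ x₀ - (ρ ^ n * ε) • v := by
  induction n with
  | zero => simp
  | succ n ih =>
    have hρn : (ρ ^ n * ε) • v ≤ x₀ := by
      refine le_trans (smul_le_smul_of_nonneg_right ?_ hv) hεv
      exact mul_le_of_le_one_left hε (pow_le_one₀ hρ₀ hρ₁)
    rw [Function.iterate_succ_apply', pow_succ', mul_assoc]
    refine (hT_mono ?_ (sub_nonneg.2 hρn) ih).trans (hstep _ (by positivity) hρn)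
    exact hT_maps.iterate n (sub_nonneg.2 hεv)

end OrderedModule

theorem concaveOn_pi {E ι : Type*} [AddCommGroup E] [Module ℝ E] {s : Set E} {f : E → ι → ℝ}
    (hs : Convex ℝ s) (hf : ∀ i, ConcaveOn ℝ s fun x => f x i) : ConcaveOn ℝ s f :=
  ⟨hs, fun _ hx _ hy _ _ ha hb hab i => (hf i).2 hx hy ha hb hab⟩

theorem stmt_12_general (N : ℕ)
    (T : (Fin N → ℝ) → (Fin N → ℝ))
    (hT_pos : ∀ x : Fin N → ℝ, (∀ i, 0 ≤ x i) → ∀ i, 0 < T x i)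
    (hT_conc : ∀ i : Fin N, ConcaveOn ℝ {x : Fin N → ℝ | ∀ j, 0 ≤ x j} (fun x => T x i))
    (xstar : Fin N → ℝ) (hxstar : ∀ i, 0 ≤ xstar i)
    (hfix : T xstar = xstar)
    (S : (Fin N → ℝ) → (Fin N → ℝ))
    (hS : ∀ d : Fin N → ℝ, (∀ i, 0 ≤ d i) →
      Tendsto (fun t : ℝ => t⁻¹ • T (t • d)) atTop (𝓝 (S d)))
    (v : Fin N → ℝ) (hv_nonneg : ∀ i, 0 ≤ v i)
    (ρ : ℝ) (hρ0 : 0 ≤ ρ) (hρ1 : ρ < 1) (heig : S v = ρ • v) :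
    ∀ ε : ℝ, 0 < ε → ε • v ≤ xstar → ∀ n : ℕ, 1 ≤ n →
      T^[n] (xstar - ε • v) ≤ xstar - (ρ ^ n * ε) • v := by
  intro ε hε hεv n _
  have hT_nonneg : ∀ x : Fin N → ℝ, 0 ≤ x → 0 ≤ T x := fun x hx i => (hT_pos x hx i).le
  have hT_mono : MonotoneOn T (Set.Ici 0) := fun x hx y hy hxy i =>
    (hT_conc i).monotoneOn_of_nonneg (fun z hz => hT_nonneg z hz i) hx hy hxy
  have hstep (ε' : ℝ) (hε' : 0 ≤ ε') (hε'v : ε' • v ≤ xstar) :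
      T (xstar - ε' • v) ≤ xstar - (ρ * ε') • v :=
    (concaveOn_pi (convex_Ici 0) hT_conc).apply_sub_smul_le hT_mono hxstar hfix hv_nonneg
      (heig ▸ hS v hv_nonneg) hε' hε'v
  exact iterate_sub_smul_le hT_nonneg hT_mono hv_nonneg hρ0 hρ1.le hstep hε.le hεv n

/-- Let `T : ℝ₊^N → ℝ₊₊^N` be continuous and concave with fixed point `x*`, let `S` be
its asymptotic mapping (given via the `Tendsto` hypothesis `S(d) = lim_{t→∞} T(td)/t`),
and suppose `S(v) = ρv` for some `v ∈ ℝ₊^N \ {0}` and `ρ ∈ [0,1)`. Then for every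
`ε > 0` with `x* ≥ εv` and every `n ≥ 1`: `T^n(x* − εv) ≤ x* − ρ^n ε v`. -/
theorem stmt_12 (N : ℕ) (hN : 1 ≤ N)
    (T : (Fin N → ℝ) → (Fin N → ℝ))
    (hT_pos : ∀ x : Fin N → ℝ, (∀ i, 0 ≤ x i) → ∀ i, 0 < T x i)
    (hT_cont : ContinuousOn T {x : Fin N → ℝ | ∀ i, 0 ≤ x i})
    (hT_conc : ∀ i : Fin N, ConcaveOn ℝ {x : Fin N → ℝ | ∀ j, 0 ≤ x j} (fun x => T x i))
    (xstar : Fin N → ℝ) (hxstar : ∀ i, 0 ≤ xstar i)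
    (hfix : T xstar = xstar)
    (S : (Fin N → ℝ) → (Fin N → ℝ))
    (hS : ∀ d : Fin N → ℝ, (∀ i, 0 ≤ d i) →
      Tendsto (fun t : ℝ => t⁻¹ • T (t • d)) atTop (𝓝 (S d)))
    (v : Fin N → ℝ) (hv_nonneg : ∀ i, 0 ≤ v i) (hv_ne : v ≠ 0)
    (ρ : ℝ) (hρ0 : 0 ≤ ρ) (hρ1 : ρ < 1) (heig : S v = ρ • v) :
    ∀ ε : ℝ, 0 < ε → ε • v ≤ xstar → ∀ n : ℕ, 1 ≤ n →
      T^[n] (xstar - ε • v) ≤ xstar - (ρ ^ n * ε) • v :=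
  stmt_12_general N T hT_pos hT_conc xstar hxstar hfix S hS v hv_nonneg ρ hρ0 hρ1 heig
end

section
/- Fix N ≥ 1, an index i ∈ {1,…,N}, a finite nonempty set 𝒩_i, and positive reals d_j (j ∈ 𝒩_i), K, B, p_k (k ∈ {1,…,N}), g_{k,j} (k ∈ {1,…,N}, j ∈ 𝒩_i), and σ² > 0. Define t_i : ℝ₊^N → ℝ by t_i(x) = Σ_{j∈𝒩_i} d_j / ( K·B·log₂(1 + p_i·g_{i,j} / (Σ_{k≠i} x_k·p_k·g_{k,j} + σ²)) ). Then for every x ∈ ℝ₊^N, lim_{t→∞} t_i(tx)/t = Σ_{j∈𝒩_i} (ln(2)·d_j / (K·B·p_i·g_{i,j})) · Σ_{k≠i} x_k·p_k·g_{k,j}. -/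
/-!
Put `y = t S + σ²` for the interference-plus-noise level at scale `t`. Since
`y log(1 + c/y) → c` as `y → ∞`, we get `t log(1 + c/(tS + σ²)) → c/S`, so each summand
`d_j / (K B log₂(1 + c_j/(t S_j + σ²)))` grows like `(ln 2 · d_j / (K B c_j)) S_j · t`.
-/

open Filter Topology Real

theorem tendsto_mul_log_one_add_div_mul_add (c S σ : ℝ) (hS : 0 < S) :
    Tendsto (fun t : ℝ => t * log (1 + c / (t * S + σ))) atTop (𝓝 (c / S)) := by
  have hy : Tendsto (fun t : ℝ => t * S + σ) atTop atTop :=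
    tendsto_atTop_add_const_right _ σ (tendsto_id.atTop_mul_const hS)
  have hlog : Tendsto (fun t : ℝ => log (1 + c / (t * S + σ))) atTop (𝓝 0) := by
    have hone : Tendsto (fun t : ℝ => 1 + c / (t * S + σ)) atTop (𝓝 1) := by
      simpa using tendsto_const_nhds.add (tendsto_const_nhds.div_atTop hy)
    simpa [Function.comp_def] using (continuousAt_log one_ne_zero).tendsto.comp hone
  have hlim := (((tendsto_mul_log_one_add_div_atTop c).comp hy).sub (hlog.const_mul σ)).div_const S
  simp only [mul_zero, sub_zero] at hlim
  refine hlim.congr fun t => ?_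
  simp only [Function.comp_apply]
  field_simp
  ring

theorem tendsto_inv_logb_one_add_div_mul_add_div (b c S σ : ℝ) (hc : c ≠ 0) (hS : 0 ≤ S) :
    Tendsto (fun t : ℝ => (logb b (1 + c / (t * S + σ)))⁻¹ / t) atTop
      (𝓝 (log b * S / c)) := by
  rcases hS.eq_or_lt with rfl | hSpos
  · simpa using tendsto_const_nhds.div_atTop tendsto_id
  convert ((tendsto_mul_log_one_add_div_mul_add c S σ hSpos).inv₀
    (div_ne_zero hc hSpos.ne')).const_mul (log b) using 2 with t
  · rw [logb, inv_div, div_div, div_eq_mul_inv, mul_comm (log _) t]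
  · rw [inv_div, mul_div_assoc]

theorem stmt_15_general (N : ℕ) (i : Fin N)
    (J : Type) [Fintype J]
    (d : J → ℝ)
    (K B : ℝ)
    (p : Fin N → ℝ) (hp : ∀ k, 0 < p k)
    (g : Fin N → J → ℝ) (hg : ∀ k j, 0 < g k j)
    (σ2 : ℝ)
    (ti : (Fin N → ℝ) → ℝ)
    (hti : ∀ x : Fin N → ℝ, ti x = ∑ j : J,
      d j / (K * B * Real.logb 2
        (1 + p i * g i j / ((∑ k ∈ Finset.univ.erase i, x k * p k * g k j) + σ2))))
    (x : Fin N → ℝ) (hx : ∀ k, 0 ≤ x k) :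
    Tendsto (fun t : ℝ => ti (t • x) / t) atTop
      (𝓝 (∑ j : J, (Real.log 2 * d j / (K * B * p i * g i j)) *
        ∑ k ∈ Finset.univ.erase i, x k * p k * g k j)) := by
  set S : J → ℝ := fun j => ∑ k ∈ Finset.univ.erase i, x k * p k * g k j
  have hS : ∀ j, 0 ≤ S j := fun j =>
    Finset.sum_nonneg fun k _ => by have := hp k; have := hg k j; have := hx k; positivity
  have hscale : ∀ (t : ℝ) j, ∑ k ∈ Finset.univ.erase i, (t • x) k * p k * g k j = t * S j :=
    fun t j => by simp only [S, Finset.mul_sum, Pi.smul_apply, smul_eq_mul, mul_assoc]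
  have hterm : ∀ j, Tendsto
      (fun t : ℝ => d j / (K * B) * ((logb 2 (1 + p i * g i j / (t * S j + σ2)))⁻¹ / t))
      atTop (𝓝 (log 2 * d j / (K * B * p i * g i j) * S j)) := fun j => by
    convert (tendsto_inv_logb_one_add_div_mul_add_div 2 _ _ σ2
      (mul_pos (hp i) (hg i j)).ne' (hS j)).const_mul (d j / (K * B)) using 2
    ring
  refine (tendsto_finsetSum Finset.univ fun j _ => hterm j).congr fun t => ?_
  simp only [hti, hscale, Finset.sum_div]
  refine Finset.sum_congr rfl fun j _ => ?_
  ring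

/-- For the load coupling function
`t_i(x) = Σ_{j∈𝒩_i} d_j / (K·B·log₂(1 + p_i g_{i,j}/(Σ_{k≠i} x_k p_k g_{k,j} + σ²)))`
of base station `i`, and every `x ∈ ℝ₊^N`,
`lim_{t→∞} t_i(tx)/t = Σ_{j∈𝒩_i} (ln 2 · d_j/(K·B·p_i·g_{i,j})) · Σ_{k≠i} x_k p_k g_{k,j}`. -/
theorem stmt_15 (N : ℕ) (hN : 1 ≤ N) (i : Fin N)
    (J : Type) [Fintype J] [Nonempty J]
    (d : J → ℝ) (hd : ∀ j, 0 < d j)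
    (K B : ℝ) (hK : 0 < K) (hB : 0 < B)
    (p : Fin N → ℝ) (hp : ∀ k, 0 < p k)
    (g : Fin N → J → ℝ) (hg : ∀ k j, 0 < g k j)
    (σ2 : ℝ) (hσ2 : 0 < σ2)
    (ti : (Fin N → ℝ) → ℝ)
    (hti : ∀ x : Fin N → ℝ, ti x = ∑ j : J,
      d j / (K * B * Real.logb 2
        (1 + p i * g i j / ((∑ k ∈ Finset.univ.erase i, x k * p k * g k j) + σ2))))
    (x : Fin N → ℝ) (hx : ∀ k, 0 ≤ x k) :
    Tendsto (fun t : ℝ => ti (t • x) / t) atTop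
      (𝓝 (∑ j : J, (Real.log 2 * d j / (K * B * p i * g i j)) *
        ∑ k ∈ Finset.univ.erase i, x k * p k * g k j)) :=
  stmt_15_general N i J d K B p hp g hg σ2 ti hti x hx
end

section
/- Let T : ℝ₊^N → ℝ₊^N be continuous and monotone (x ≤ y ⇒ T(x) ≤ T(y)), and define S : ℝ₊^N → [0,∞]^N coordinatewise by S_i(d) := liminf_{t→∞, y→d, y∈ℝ₊^N} T_i(ty)/t. Then S is monotone on ℝ₊^N: for all d, d' ∈ ℝ₊^N with d ≤ d', S_i(d) ≤ S_i(d') for every coordinate i. -/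
open Filter Topology

instance Pi.continuousInf {ι : Type*} {π : ι → Type*} [∀ i, TopologicalSpace (π i)]
    [∀ i, Min (π i)] [∀ i, ContinuousInf (π i)] : ContinuousInf (∀ i, π i) where
  continuous_inf := continuous_pi fun i =>
    ((continuous_apply i).comp continuous_fst).inf ((continuous_apply i).comp continuous_snd)

theorem tendsto_inf_right_nhdsWithin {E : Type*} [TopologicalSpace E] [SemilatticeInf E]
    [ContinuousInf E] {s : Set E} (hs : ∀ x ∈ s, ∀ y ∈ s, x ⊓ y ∈ s) {d d' : E}
    (hd : d ∈ s) (hdd' : d ≤ d') : Tendsto (· ⊓ d) (𝓝[s] d') (𝓝[s] d) := by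
  refine tendsto_nhdsWithin_iff.mpr ⟨?_, eventually_nhdsWithin_of_forall fun y hy => hs y hy d hd⟩
  have h : Tendsto (· ⊓ d) (𝓝 d') (𝓝 (d' ⊓ d)) :=
    (continuous_id.inf continuous_const).tendsto d'
  rw [inf_eq_right.mpr hdd'] at h
  exact h.mono_left nhdsWithin_le_nhds

/-- Replacing `y` by `y ⊓ d` sends `𝓝[s] d'` to `𝓝[s] d` and, by monotonicity, can only
decrease `f t y`; hence the liminf at `d` is at most the liminf at `d'`. -/
theorem monotoneOn_liminf_prod_nhdsWithin {α E γ : Type*} [TopologicalSpace E]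
    [SemilatticeInf E] [ContinuousInf E] [CompleteLattice γ] (la : Filter α) {s : Set E}
    (hs : ∀ x ∈ s, ∀ y ∈ s, x ⊓ y ∈ s) (f : α → E → γ) (hf : ∀ᶠ t in la, MonotoneOn (f t) s) :
    MonotoneOn (fun d => liminf (fun q : α × E => f q.1 q.2) (la ×ˢ 𝓝[s] d)) s := by
  intro d hd d' _ hdd'
  have hmap : Tendsto (Prod.map id (· ⊓ d)) (la ×ˢ 𝓝[s] d') (la ×ˢ 𝓝[s] d) :=
    tendsto_id.prodMap (tendsto_inf_right_nhdsWithin hs hd hdd')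
  refine hmap.liminf_le_liminf_comp.trans (liminf_le_liminf ?_)
  have hs_eventually : ∀ᶠ y in 𝓝[s] d', y ∈ s := self_mem_nhdsWithin
  filter_upwards [hf.prod_inl _, hs_eventually.prod_inr _] with q hq hqs
  exact hq (hs _ hqs d hd) hqs inf_le_left

theorem monotoneOn_div_apply_smul {ι : Type*} (T : (ι → ℝ) → (ι → ℝ))
    (hT_mono : ∀ x y : ι → ℝ, (∀ i, 0 ≤ x i) → (∀ i, 0 ≤ y i) → x ≤ y → T x ≤ T y)
    (i : ι) {t : ℝ} (ht : 0 ≤ t) :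
    MonotoneOn (fun y => ((T (t • y) i : ℝ) : EReal) / ((t : ℝ) : EReal))
      {y : ι → ℝ | ∀ i, 0 ≤ y i} := by
  intro x hx y hy hxy
  have hTxy := hT_mono _ _ (fun j => mul_nonneg ht (hx j)) (fun j => mul_nonneg ht (hy j))
    (smul_le_smul_of_nonneg_left hxy ht) i
  exact EReal.div_le_div_right_of_nonneg (by exact_mod_cast ht) (by exact_mod_cast hTxy)

theorem stmt_16_general (N : ℕ)
    (T : (Fin N → ℝ) → (Fin N → ℝ))
    (hT_mono : ∀ x y : Fin N → ℝ, (∀ i, 0 ≤ x i) → (∀ i, 0 ≤ y i) → x ≤ y → T x ≤ T y)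
    (S : (Fin N → ℝ) → Fin N → EReal)
    (hS : ∀ dd : Fin N → ℝ, (∀ i, 0 ≤ dd i) → ∀ i : Fin N,
      S dd i = Filter.liminf
        (fun q : ℝ × (Fin N → ℝ) => ((T (q.1 • q.2) i : ℝ) : EReal) / ((q.1 : ℝ) : EReal))
        ((atTop : Filter ℝ) ×ˢ (𝓝 dd ⊓ Filter.principal {y : Fin N → ℝ | ∀ i, 0 ≤ y i}))) :
    ∀ d d' : Fin N → ℝ, (∀ i, 0 ≤ d i) → (∀ i, 0 ≤ d' i) → d ≤ d' →
      ∀ i : Fin N, S d i ≤ S d' i := by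
  intro d d' hd hd' hdd' i
  rw [hS d hd i, hS d' hd' i]
  refine monotoneOn_liminf_prod_nhdsWithin atTop (s := {y : Fin N → ℝ | ∀ i, 0 ≤ y i})
    (fun x hx y hy j => le_min (hx j) (hy j))
    (fun t y => ((T (t • y) i : ℝ) : EReal) / ((t : ℝ) : EReal)) ?_ hd hd' hdd'
  filter_upwards [eventually_ge_atTop 0] with t ht
  exact monotoneOn_div_apply_smul T hT_mono i ht

/-- If `T : ℝ₊^N → ℝ₊^N` is continuous and monotone, then the asymptotic mapping `S`
defined coordinatewise by `S_i(d) = liminf_{t→∞, y→d, y∈ℝ₊^N} T_i(ty)/t ∈ [0,∞]`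
(values in `EReal`) is monotone on `ℝ₊^N`. -/
theorem stmt_16 (N : ℕ) (hN : 1 ≤ N)
    (T : (Fin N → ℝ) → (Fin N → ℝ))
    (hT_nonneg : ∀ x : Fin N → ℝ, (∀ i, 0 ≤ x i) → ∀ i, 0 ≤ T x i)
    (hT_cont : ContinuousOn T {x : Fin N → ℝ | ∀ i, 0 ≤ x i})
    (hT_mono : ∀ x y : Fin N → ℝ, (∀ i, 0 ≤ x i) → (∀ i, 0 ≤ y i) → x ≤ y → T x ≤ T y)
    (S : (Fin N → ℝ) → Fin N → EReal)
    (hS : ∀ dd : Fin N → ℝ, (∀ i, 0 ≤ dd i) → ∀ i : Fin N,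
      S dd i = Filter.liminf
        (fun q : ℝ × (Fin N → ℝ) => ((T (q.1 • q.2) i : ℝ) : EReal) / ((q.1 : ℝ) : EReal))
        ((atTop : Filter ℝ) ×ˢ (𝓝 dd ⊓ Filter.principal {y : Fin N → ℝ | ∀ i, 0 ≤ y i}))) :
    ∀ d d' : Fin N → ℝ, (∀ i, 0 ≤ d i) → (∀ i, 0 ≤ d' i) → d ≤ d' →
      ∀ i : Fin N, S d i ≤ S d' i :=
  stmt_16_general N T hT_mono S hS
end
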